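/- arXiv:2202.06898 — 3 statements merged into one kernel-verified Lean document; each statement's English description precedes it below -/
import Mathlib

section
/- Every b-matching game has a non-empty 2/3-approximate core: for every b-matching game (N,v) on a finite simple graph G with positive integer vertex capacities b and positive edge weights w, there exists a vector x ∈ ℝ^N with x_i ≥ 0 for all i, x(N) = v(N), and x(S) ≥ (2/3)·v(S) for every S ⊆ N. -/
open scoped Classical
open Finset

namespace MatchingGames

variable {V : Type*}

/-- `M` is a matching of the graph `G`: a set of edges of `G` that are pairwise
vertex-disjoint. -/
def IsMatching (G : SimpleGraph V) (M : Finset (Sym2 V)) : Prop :=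
  (∀ e ∈ M, e ∈ G.edgeSet) ∧
    ∀ e ∈ M, ∀ f ∈ M, e ≠ f → ∀ v : V, v ∈ e → v ∉ f

/-- every endpoint of every edge of `M` belongs to the coalition `S`, i.e. `M` is a
set of edges of the induced subgraph `G[S]`. -/
def EdgesIn (S : Finset V) (M : Finset (Sym2 V)) : Prop :=
  ∀ e ∈ M, ∀ v : V, v ∈ e → v ∈ S

/-- the weight `w(M)` of a set of edges `M`. -/
noncomputable def mWeight (w : Sym2 V → ℝ) (M : Finset (Sym2 V)) : ℝ :=
  ∑ e ∈ M, w e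

/-- the value `v(S)` of a coalition `S` in the matching game on `(G,w)`:
the maximum weight of a matching of the induced subgraph `G[S]`. -/
noncomputable def matchVal (G : SimpleGraph V) (w : Sym2 V → ℝ) (S : Finset V) : ℝ :=
  sSup {t | ∃ M : Finset (Sym2 V), IsMatching G M ∧ EdgesIn S M ∧ t = mWeight w M}

/-- `x` is a core allocation of the cooperative game with value function `v`:
`x(N) = v(N)` and `x(S) ≥ v(S)` for every coalition `S`. -/
def InCore [Fintype V] (v : Finset V → ℝ) (x : V → ℝ) : Prop :=
  (∑ i, x i) = v Finset.univ ∧ ∀ S : Finset V, v S ≤ ∑ i ∈ S, x i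

/-- `M` is a `b`-matching of `G`: a set of edges of `G` such that every vertex `i` is
incident to at most `b i` edges of `M`. -/
def IsBMatching [DecidableEq V] (G : SimpleGraph V) (b : V → ℕ)
    (M : Finset (Sym2 V)) : Prop :=
  (∀ e ∈ M, e ∈ G.edgeSet) ∧ ∀ i : V, (M.filter (fun e => i ∈ e)).card ≤ b i

/-- the value `v(S)` of a coalition `S` in the `b`-matching game on `(G,b,w)`:
the maximum weight of a `b`-matching of the induced subgraph `G[S]`. -/
noncomputable def bVal [DecidableEq V] (G : SimpleGraph V) (b : V → ℕ)
    (w : Sym2 V → ℝ) (S : Finset V) : ℝ :=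
  sSup {t | ∃ M : Finset (Sym2 V), IsBMatching G b M ∧ EdgesIn S M ∧ t = mWeight w M}

/-- `(M,p)` is a solution for the instance `(G,b,w)`: `M` is a `b`-matching of `G`,
matched pairs split the weight of their edge into two nonnegative pay-offs, and all
other pay-offs are zero. -/
def IsBSolution [DecidableEq V] (G : SimpleGraph V) (b : V → ℕ) (w : Sym2 V → ℝ)
    (M : Finset (Sym2 V)) (p : V → V → ℝ) : Prop :=
  IsBMatching G b M ∧
    (∀ i j : V, s(i, j) ∈ M → 0 ≤ p i j ∧ 0 ≤ p j i ∧ p i j + p j i = w s(i, j)) ∧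
    ∀ i j : V, s(i, j) ∉ M → p i j = 0

/-- the total pay-off vector `p^t`. -/
noncomputable def totalPayoff [Fintype V] (p : V → V → ℝ) (i : V) : ℝ := ∑ j, p i j

/-- the utility `u_p(i)`: the `b i`-th largest pay-off `p i j` over the edges `ij` of
`G` (taken as `0` if `i` has fewer than `b i` incident edges; note that in Lean
`sSup ∅ = 0` for real numbers). -/
noncomputable def utility [Fintype V] (G : SimpleGraph V) (b : V → ℕ)
    (p : V → V → ℝ) (i : V) : ℝ :=
  sSup {t : ℝ | b i ≤ (Finset.univ.filter (fun j : V => G.Adj i j ∧ t ≤ p i j)).card}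

/-- a solution `(M,p)` for `(G,b,w)` is stable if no pair `{i,j}` with `ij ∈ E \ M`
satisfies `u_p(i) + u_p(j) < w(ij)`. -/
def IsBStable [Fintype V] [DecidableEq V] (G : SimpleGraph V) (b : V → ℕ)
    (w : Sym2 V → ℝ) (M : Finset (Sym2 V)) (p : V → V → ℝ) : Prop :=
  IsBSolution G b w M p ∧
    ∀ i j : V, G.Adj i j → s(i, j) ∉ M →
      w s(i, j) ≤ utility G b p i + utility G b p j


section FarkasSec
open scoped RealInnerProductSpace

variable {H : Type*} [NormedAddCommGroup H] [InnerProductSpace ℝ H] [FiniteDimensional ℝ H]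

open scoped Classical in
/-- Carathéodory-type reduction: a nonnegative combination can be rewritten as a
nonnegative combination over a linearly independent subfamily. -/
lemma carath {ι : Type*} [Fintype ι] (a : ι → H) (t : Finset ι) :
    ∀ (y : ι → ℝ), (∀ i, 0 ≤ y i) →
      ∃ (t' : Finset ι) (y' : ι → ℝ), t' ⊆ t ∧
        LinearIndependent ℝ (fun i : ↥t' => a i) ∧
        (∀ i, 0 ≤ y' i) ∧ ∑ i ∈ t, y i • a i = ∑ i ∈ t', y' i • a i := by
  induction t using Finset.strongInduction with
  | _ t ih =>
    intro y hy
    by_cases hli : LinearIndependent ℝ (fun i : ↥t => a i)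
    · exact ⟨t, y, subset_rfl, hli, hy, rfl⟩
    · obtain ⟨g, hg0, i₁, hgi₁⟩ := Fintype.not_linearIndependent_iff.mp hli
      set G : ι → ℝ := fun i => if h : i ∈ t then g ⟨i, h⟩ else 0 with hG
      have hGsum : ∑ i ∈ t, G i • a i = 0 := by
        rw [← hg0, ← Finset.sum_attach t (fun i => G i • a i)]
        refine Finset.sum_congr rfl fun i _ => ?_
        simp [hG, i.2]
      have hGex : ∃ i ∈ t, G i ≠ 0 := ⟨i₁, i₁.2, by simpa [hG, i₁.2] using hgi₁⟩
      obtain ⟨g', hg'sum, i₂, hi₂t, hi₂pos⟩ :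
          ∃ g' : ι → ℝ, ∑ i ∈ t, g' i • a i = 0 ∧ ∃ i ∈ t, 0 < g' i := by
        obtain ⟨i, hit, hiG⟩ := hGex
        rcases lt_or_gt_of_ne hiG with hneg | hpos
        · refine ⟨-G, by simpa using hGsum, i, hit, by simpa using hneg⟩
        · exact ⟨G, hGsum, i, hit, hpos⟩
      have hPne : (t.filter (fun i => 0 < g' i)).Nonempty :=
        ⟨i₂, Finset.mem_filter.mpr ⟨hi₂t, hi₂pos⟩⟩
      have hrmin : ∀ i ∈ t.filter (fun i => 0 < g' i),
          (t.filter (fun i => 0 < g' i)).inf' hPne (fun i => y i / g' i) ≤ y i / g' i :=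
        fun i hiP => Finset.inf'_le _ hiP
      obtain ⟨i₀, hi₀P, hi₀min⟩ := Finset.exists_mem_eq_inf' hPne (fun i => y i / g' i)
      have hi₀t : i₀ ∈ t := (Finset.mem_filter.mp hi₀P).1
      have hi₀pos : 0 < g' i₀ := (Finset.mem_filter.mp hi₀P).2
      obtain ⟨r, hrdef⟩ : ∃ r : ℝ, r = (t.filter (fun i => 0 < g' i)).inf' hPne
        (fun i => y i / g' i) := ⟨_, rfl⟩
      have hr0 : 0 ≤ r := by
        rw [hrdef]
        exact Finset.le_inf' _ _ fun i hiP =>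
          div_nonneg (hy i) (Finset.mem_filter.mp hiP).2.le
      have hri₀ : r = y i₀ / g' i₀ := by rw [hrdef, hi₀min]
      set y'' : ι → ℝ := fun i => if i ∈ t then y i - r * g' i else 0 with hy''
      have hy''0 : ∀ i, 0 ≤ y'' i := by
        intro i
        rw [hy'']; dsimp only
        by_cases hit : i ∈ t
        · simp only [hit, if_true]
          by_cases hgi : 0 < g' i
          · have h1 : r ≤ y i / g' i := by
              rw [hrdef]; exact hrmin i (Finset.mem_filter.mpr ⟨hit, hgi⟩)
            have h2 : r * g' i ≤ y i / g' i * g' i :=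
              mul_le_mul_of_nonneg_right h1 hgi.le
            rw [div_mul_cancel₀ _ (ne_of_gt hgi)] at h2
            linarith
          · push_neg at hgi
            nlinarith [hy i]
        · simp [hit]
      have hy''i₀ : y'' i₀ = 0 := by
        rw [hy'']; simp only [hi₀t, if_true, hri₀]
        rw [div_mul_cancel₀ _ (ne_of_gt hi₀pos), sub_self]
      have hsum2 : ∑ i ∈ t, y i • a i = ∑ i ∈ t, y'' i • a i := by
        have heq : ∑ i ∈ t, y'' i • a i
            = ∑ i ∈ t, (y i • a i) - r • ∑ i ∈ t, g' i • a i := by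
          rw [Finset.smul_sum, ← Finset.sum_sub_distrib]
          refine Finset.sum_congr rfl fun i hit => ?_
          rw [hy'']; simp only [hit, if_true]
          rw [sub_smul, mul_smul]
        rw [heq, hg'sum, smul_zero, sub_zero]
      have hsum3 : ∑ i ∈ t, y'' i • a i = ∑ i ∈ t.erase i₀, y'' i • a i := by
        rw [← Finset.add_sum_erase t _ hi₀t, hy''i₀, zero_smul, zero_add]
      obtain ⟨t', y', ht'sub, ht'li, hy'0, hy'sum⟩ :=
        ih (t.erase i₀) (Finset.erase_ssubset hi₀t) y'' hy''0
      exact ⟨t', y', ht'sub.trans (Finset.erase_subset _ _), ht'li, hy'0,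
        by rw [hsum2, hsum3, hy'sum]⟩

open scoped Classical in
/-- Farkas' lemma for finitely many generators in a finite-dimensional real inner
product space. -/
theorem farkas {ι : Type*} [Fintype ι] (a : ι → H) (w : H)
    (h : ∀ u : H, (∀ i, ⟪a i, u⟫ ≤ 0) → ⟪w, u⟫ ≤ 0) :
    ∃ y : ι → ℝ, (∀ i, 0 ≤ y i) ∧ w = ∑ i, y i • a i := by
  set C : Set H := {v | ∃ y : ι → ℝ, (∀ i, 0 ≤ y i) ∧ v = ∑ i, y i • a i} with hC
  suffices hwC : w ∈ C by
    obtain ⟨y, hy, hyw⟩ := hwC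
    exact ⟨y, hy, hyw⟩
  by_contra hwC
  set D : Finset ι → Set H := fun t =>
    if LinearIndependent ℝ (fun i : ↥t => a i) then
      {v | ∃ y : ι → ℝ, (∀ i, 0 ≤ y i) ∧ v = ∑ i ∈ t, y i • a i} else ∅ with hD
  have hDclosed : ∀ t, IsClosed (D t) := by
    intro t
    rw [hD]; dsimp only
    by_cases hli : LinearIndependent ℝ (fun i : ↥t => a i)
    · simp only [hli, if_true]
      set Ψ : (↥t → ℝ) →ₗ[ℝ] H :=
        { toFun := fun y => ∑ i : ↥t, y i • a i
          map_add' := by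
            intro y z; simp [add_smul, Finset.sum_add_distrib]
          map_smul' := by
            intro c y; simp [smul_smul, Finset.smul_sum] } with hΨ
      have hker : LinearMap.ker Ψ = ⊥ := by
        rw [LinearMap.ker_eq_bot']
        intro m hm
        have hz := Fintype.linearIndependent_iff.mp hli m (by simpa [hΨ] using hm)
        funext i; exact hz i
      have hce := Ψ.isClosedEmbedding_of_injective hker
      have himg : {v : H | ∃ y : ι → ℝ, (∀ i, 0 ≤ y i) ∧ v = ∑ i ∈ t, y i • a i}
          = Ψ '' {y : ↥t → ℝ | ∀ i, 0 ≤ y i} := by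
        ext v
        constructor
        · rintro ⟨y, hy, rfl⟩
          refine ⟨fun i => y i, fun i => hy i, ?_⟩
          simp only [hΨ, LinearMap.coe_mk, AddHom.coe_mk]
          show ∑ i : ↥t, y i • a i = _
          rw [← Finset.sum_attach t (fun i => y i • a i), Finset.univ_eq_attach]
        · rintro ⟨y, hy, rfl⟩
          refine ⟨fun i => if h : i ∈ t then y ⟨i, h⟩ else 0, fun i => ?_, ?_⟩
          · by_cases hit : i ∈ t <;> simp [hit, hy _]
          · simp only [hΨ, LinearMap.coe_mk, AddHom.coe_mk]
            show ∑ i : ↥t, y i • a i = _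
            rw [← Finset.sum_attach t
              (fun i => (if h : i ∈ t then y ⟨i, h⟩ else 0) • a i), Finset.univ_eq_attach]
            refine Finset.sum_congr rfl fun i _ => ?_
            simp [i.2]
      rw [himg]
      refine hce.isClosedMap _ ?_
      have hset : {y : ↥t → ℝ | ∀ i, 0 ≤ y i}
          = ⋂ i : ↥t, {y : ↥t → ℝ | 0 ≤ y i} := by
        ext y; simp
      rw [hset]
      exact isClosed_iInter fun i =>
        isClosed_le continuous_const (continuous_apply i)
    · simp [hli]
  have hCU : C = ⋃ t : Finset ι, D t := by
    ext v
    constructor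
    · rintro ⟨y, hy, rfl⟩
      obtain ⟨t', y', _, hli, hy'0, hsum⟩ := carath a Finset.univ y hy
      refine Set.mem_iUnion.mpr ⟨t', ?_⟩
      rw [hD]; dsimp only; rw [if_pos hli]
      exact ⟨y', hy'0, hsum⟩
    · intro hv
      obtain ⟨t, hvt⟩ := Set.mem_iUnion.mp hv
      rw [hD] at hvt; dsimp only at hvt
      by_cases hli : LinearIndependent ℝ (fun i : ↥t => a i)
      · rw [if_pos hli] at hvt
        obtain ⟨y, hy, rfl⟩ := hvt
        refine ⟨fun i => if i ∈ t then y i else 0,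
          fun i => by by_cases hit : i ∈ t <;> simp [hit, hy i], ?_⟩
        have hfn : ∀ i : ι, (if i ∈ t then y i else 0) • a i
            = if i ∈ t then y i • a i else 0 := by
          intro i; split <;> simp
        rw [show (∑ i : ι, (if i ∈ t then y i else 0) • a i)
            = ∑ i : ι, if i ∈ t then y i • a i else 0 from
          Finset.sum_congr rfl fun i _ => hfn i]
        rw [Finset.sum_ite_mem, Finset.univ_inter]
      · rw [if_neg hli] at hvt; exact absurd hvt (Set.notMem_empty v)
  have hCclosed : IsClosed C := by
    rw [hCU]; exact isClosed_iUnion_of_finite hDclosed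
  set K : ConvexCone ℝ H :=
    { carrier := C
      smul_mem' := by
        rintro c hc v ⟨y, hy, rfl⟩
        refine ⟨fun i => c * y i, fun i => mul_nonneg hc.le (hy i), ?_⟩
        rw [Finset.smul_sum]
        exact Finset.sum_congr rfl fun i _ => by rw [mul_smul]
      add_mem' := by
        rintro v ⟨y, hy, rfl⟩ v' ⟨y', hy', rfl⟩
        exact ⟨fun i => y i + y' i, fun i => add_nonneg (hy i) (hy' i), by
          rw [← Finset.sum_add_distrib]
          exact Finset.sum_congr rfl fun i _ => (add_smul _ _ _).symm⟩ } with hK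
  have hKne : (K : Set H).Nonempty :=
    ⟨0, ⟨fun _ => 0, fun _ => le_rfl, by simp⟩⟩
  obtain ⟨u, hu1, hu2⟩ : ∃ y : H, (∀ x ∈ C, 0 ≤ ⟪x, y⟫) ∧ ⟪y, w⟫ < 0 := by
    let P : ProperCone ℝ H :=
      { carrier := C
        add_mem' := by
          rintro v v' ⟨y, hy, rfl⟩ ⟨y', hy', rfl⟩
          exact ⟨fun i => y i + y' i, fun i => add_nonneg (hy i) (hy' i), by
            rw [← Finset.sum_add_distrib]
            exact Finset.sum_congr rfl fun i _ => (add_smul _ _ _).symm⟩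
        zero_mem' := ⟨fun _ => 0, fun _ => le_rfl, by simp⟩
        smul_mem' := by
          rintro c v ⟨y, hy, rfl⟩
          refine ⟨fun i => (c : ℝ) * y i, fun i => mul_nonneg c.2 (hy i), ?_⟩
          rw [Finset.smul_sum]
          exact Finset.sum_congr rfl fun i _ => (NNReal.smul_def c _).trans (mul_smul _ _ _).symm
        isClosed' := hCclosed }
    obtain ⟨y, h1, h2⟩ := ProperCone.hyperplane_separation' P hwC
    exact ⟨y, h1, by rw [real_inner_comm]; exact h2⟩
  have hai : ∀ i, ⟪a i, -u⟫ ≤ 0 := by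
    intro i
    have haiC : a i ∈ C := by
      refine ⟨fun j => if j = i then 1 else 0, fun j => by positivity, ?_⟩
      simp [Finset.sum_ite_eq']
    have := hu1 (a i) haiC
    rw [inner_neg_right]
    linarith
  have hw := h (-u) hai
  rw [inner_neg_right] at hw
  rw [real_inner_comm] at hu2
  linarith


end FarkasSec

section Setup

variable [Fintype V] [DecidableEq V] (G : SimpleGraph V) (b : V → ℕ) (w : Sym2 V → ℝ)

/-- the edge finset of `G` -/
noncomputable def EF : Finset (Sym2 V) := univ.filter (· ∈ G.edgeSet)

lemma mem_EF {e : Sym2 V} : e ∈ EF G ↔ e ∈ G.edgeSet := by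
  simp [EF]

lemma not_isDiag_of_mem_EF {e : Sym2 V} (he : e ∈ EF G) : ¬ e.IsDiag :=
  SimpleGraph.not_isDiag_of_mem_edgeSet G ((mem_EF G).mp he)

/-- fractional degree of `x` at vertex `i` -/
noncomputable def vdeg (x : Sym2 V → ℝ) (i : V) : ℝ :=
  ∑ e ∈ (EF G).filter (fun e => i ∈ e), x e

/-- feasible fractional b-matchings -/
def Feas (x : Sym2 V → ℝ) : Prop :=
  (∀ e, 0 ≤ x e) ∧ (∀ e, x e ≤ 1) ∧ (∀ e ∉ EF G, x e = 0) ∧ ∀ i, vdeg G x i ≤ b i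

/-- the fractional objective -/
noncomputable def LL (x : Sym2 V → ℝ) : ℝ := ∑ e ∈ EF G, w e * x e

lemma vdeg_add_smul (x z : Sym2 V → ℝ) (t : ℝ) (i : V) :
    vdeg G (fun e => x e + t * z e) i = vdeg G x i + t * vdeg G z i := by
  simp only [vdeg, Finset.sum_add_distrib, Finset.mul_sum]

lemma LL_add_smul (x z : Sym2 V → ℝ) (t : ℝ) :
    LL G w (fun e => x e + t * z e) = LL G w x + t * (∑ e ∈ EF G, w e * z e) := by
  simp only [LL, Finset.mul_sum, ← Finset.sum_add_distrib]
  exact Finset.sum_congr rfl fun e _ => by ring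

lemma abs_vdeg_le (z : Sym2 V → ℝ) (i : V) : |vdeg G z i| ≤ ∑ e, |z e| := by
  calc |vdeg G z i| ≤ ∑ e ∈ (EF G).filter (fun e => i ∈ e), |z e| :=
        Finset.abs_sum_le_sum_abs _ _
    _ ≤ ∑ e, |z e| := Finset.sum_le_sum_of_subset_of_nonneg (Finset.subset_univ _)
        (fun e _ _ => abs_nonneg _)

/-- fractional support edges -/
noncomputable def fracs (x : Sym2 V → ℝ) : Finset (Sym2 V) :=
  (EF G).filter (fun e => 0 < x e ∧ x e < 1)

/-- slack vertices -/
noncomputable def slacks (x : Sym2 V → ℝ) : Finset V :=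
  univ.filter (fun i => vdeg G x i < b i)

/-- the measure used to choose a canonical maximizer -/
noncomputable def meas (x : Sym2 V → ℝ) : ℕ :=
  (Fintype.card V + 1) * (fracs G x).card + (slacks G b x).card

lemma feas_zero : Feas G b (fun _ => 0) := by
  refine ⟨fun e => le_rfl, fun e => zero_le_one, fun e _ => rfl, fun i => ?_⟩
  simp [vdeg]

lemma isClosed_feas : IsClosed {x : Sym2 V → ℝ | Feas G b x} := by
  have h1 : {x : Sym2 V → ℝ | Feas G b x} =
      (⋂ e, {x : Sym2 V → ℝ | 0 ≤ x e}) ∩ ((⋂ e, {x : Sym2 V → ℝ | x e ≤ 1}) ∩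
      ((⋂ e ∈ {e | e ∉ EF G}, {x : Sym2 V → ℝ | x e = 0}) ∩
      (⋂ i, {x : Sym2 V → ℝ | vdeg G x i ≤ b i}))) := by
    ext x
    simp only [Feas, Set.mem_inter_iff, Set.mem_iInter, Set.mem_setOf_eq]
    try tauto
  have hvdeg : ∀ i, Continuous (fun x : Sym2 V → ℝ => vdeg G x i) := by
    intro i
    exact continuous_finset_sum _ fun e _ => continuous_apply e
  rw [h1]
  refine IsClosed.inter (isClosed_iInter fun e =>
      isClosed_le continuous_const (continuous_apply e)) (IsClosed.inter
      (isClosed_iInter fun e => isClosed_le (continuous_apply e) continuous_const)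
      (IsClosed.inter (isClosed_biInter fun e _ => isClosed_eq (continuous_apply e)
        continuous_const)
      (isClosed_iInter fun i => isClosed_le (hvdeg i) continuous_const)))

lemma isCompact_feas : IsCompact {x : Sym2 V → ℝ | Feas G b x} := by
  refine IsCompact.of_isClosed_subset (isCompact_univ_pi fun e => isCompact_Icc
    (a := (0:ℝ)) (b := 1)) (isClosed_feas G b) ?_
  intro x hx
  simp only [Set.mem_univ_pi, Set.mem_Icc]
  exact fun e => ⟨hx.1 e, hx.2.1 e⟩

lemma continuous_LL : Continuous (fun x : Sym2 V → ℝ => LL G w x) :=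
  continuous_finset_sum _ fun e _ => continuous_const.mul (continuous_apply e)

/-- existence of a maximizer of the LP that minimizes the measure `meas` -/
lemma exists_good_maximizer : ∃ x : Sym2 V → ℝ, Feas G b x ∧
    (∀ x', Feas G b x' → LL G w x' ≤ LL G w x) ∧
    (∀ x', Feas G b x' → LL G w x' = LL G w x → meas G b x ≤ meas G b x') := by
  obtain ⟨x₀, hx₀mem, hx₀max⟩ := (isCompact_feas G b).exists_isMaxOn
    ⟨(fun _ => 0), feas_zero G b⟩ (continuous_LL G w).continuousOn
  have hex : ∃ n : ℕ, ∃ x, (Feas G b x ∧ LL G w x = LL G w x₀) ∧ meas G b x = n :=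
    ⟨meas G b x₀, x₀, ⟨hx₀mem, rfl⟩, rfl⟩
  obtain ⟨x, ⟨hxf, hxL⟩, hxm⟩ := Nat.find_spec hex
  refine ⟨x, hxf, ?_, ?_⟩
  · intro x' hx'
    rw [hxL]
    exact hx₀max hx'
  · intro x' hx' hL'
    have : meas G b x' ≥ Nat.find hex := by
      refine Nat.find_le ⟨x', ⟨hx', ?_⟩, rfl⟩
      rw [hL', hxL]
    omega


end Setup

section Moves

variable [Fintype V] [DecidableEq V] (G : SimpleGraph V) (b : V → ℕ) (w : Sym2 V → ℝ)

lemma eps_lemma (x u : Sym2 V → ℝ) (hx : Feas G b x)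
    (h1 : ∀ e, 1 ≤ x e → u e ≤ 0)
    (h2 : ∀ e, x e ≤ 0 → 0 ≤ u e)
    (h2' : ∀ e ∉ EF G, u e = 0)
    (h3 : ∀ i, vdeg G x i = (b i : ℝ) → vdeg G u i ≤ 0) :
    ∃ ε : ℝ, 0 < ε ∧ ∀ t, 0 ≤ t → t ≤ ε → Feas G b (fun e => x e + t * u e) := by
  obtain ⟨hx0, hx1, hxE, hxd⟩ := hx
  set A : ℝ := ∑ e, |u e| with hA
  have hA0 : 0 ≤ A := Finset.sum_nonneg fun e _ => abs_nonneg _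
  have huA : ∀ e, |u e| ≤ A := by
    intro e
    exact Finset.single_le_sum (f := fun e => |u e|) (fun e _ => abs_nonneg _)
      (Finset.mem_univ e)
  -- margin on fractional edges
  obtain ⟨m1, hm1pos, hm1le⟩ : ∃ m1 : ℝ, 0 < m1 ∧
      ∀ e ∈ fracs G x, m1 ≤ min (x e) (1 - x e) := by
    by_cases hne : (fracs G x).Nonempty
    · refine ⟨(fracs G x).inf' hne (fun e => min (x e) (1 - x e)), ?_,
        fun e he => Finset.inf'_le _ he⟩
      obtain ⟨e₀, he₀, heq⟩ := Finset.exists_mem_eq_inf' hne (fun e => min (x e) (1 - x e))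
      rw [heq]
      have := (Finset.mem_filter.mp he₀).2
      simp only [lt_min_iff]
      constructor <;> linarith [this.1, this.2]
    · exact ⟨1, one_pos, fun e he => absurd ⟨e, he⟩ hne⟩
  -- margin on slack vertices
  obtain ⟨m2, hm2pos, hm2le⟩ : ∃ m2 : ℝ, 0 < m2 ∧
      ∀ i ∈ slacks G b x, m2 ≤ (b i : ℝ) - vdeg G x i := by
    by_cases hne : (slacks G b x).Nonempty
    · refine ⟨(slacks G b x).inf' hne (fun i => (b i : ℝ) - vdeg G x i), ?_,
        fun i hi => Finset.inf'_le _ hi⟩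
      obtain ⟨i₀, hi₀, heq⟩ := Finset.exists_mem_eq_inf' hne
        (fun i => (b i : ℝ) - vdeg G x i)
      rw [heq]
      have := (Finset.mem_filter.mp hi₀).2
      linarith
    · exact ⟨1, one_pos, fun i hi => absurd ⟨i, hi⟩ hne⟩
  set M : ℝ := min (min m1 m2) (1/2) with hM
  have hMpos : 0 < M := by
    rw [hM]; simp only [lt_min_iff]
    exact ⟨⟨hm1pos, hm2pos⟩, by norm_num⟩
  refine ⟨M / (A + 1), by positivity, ?_⟩
  intro t ht0 htε
  have hbound : ∀ c : ℝ, |c| ≤ A → t * |c| ≤ M := by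
    intro c hc
    have h1' : t * |c| ≤ (M / (A + 1)) * A := by
      apply mul_le_mul htε hc (abs_nonneg c) (by positivity)
    have h2'' : (M / (A + 1)) * A ≤ M := by
      rw [div_mul_eq_mul_div, div_le_iff₀ (by linarith)]
      nlinarith
    linarith
  have hedge : ∀ e, t * |u e| ≤ M := fun e => hbound _ (huA e)
  have hM12 : M ≤ 1/2 := min_le_right _ _
  have hMm1 : ∀ e ∈ fracs G x, M ≤ min (x e) (1 - x e) :=
    fun e he => le_trans (le_trans (min_le_left _ _) (min_le_left _ _)) (hm1le e he)
  have hMm2 : ∀ i ∈ slacks G b x, M ≤ (b i : ℝ) - vdeg G x i :=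
    fun i hi => le_trans (le_trans (min_le_left _ _) (min_le_right _ _)) (hm2le i hi)
  have habs1 : ∀ e, t * u e ≤ M := by
    intro e
    nlinarith [le_abs_self (u e), hedge e, abs_nonneg (u e)]
  have habs2 : ∀ e, -M ≤ t * u e := by
    intro e
    nlinarith [neg_abs_le (u e), hedge e, abs_nonneg (u e)]
  refine ⟨fun e => ?_, fun e => ?_, fun e he => ?_, fun i => ?_⟩
  · -- nonneg
    show 0 ≤ x e + t * u e
    rcases le_or_gt (x e) 0 with hc | hc
    · have hu := h2 e hc
      have hx0' := hx0 e
      nlinarith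
    · rcases lt_or_ge (x e) 1 with hc2 | hc2
      · by_cases heE : e ∈ EF G
        · have hef : e ∈ fracs G x := Finset.mem_filter.mpr ⟨heE, hc, hc2⟩
          have h6 : M ≤ x e := (hMm1 e hef).trans (min_le_left _ _)
          linarith [habs2 e]
        · rw [hxE e heE] at hc; linarith
      · have hu := h1 e hc2
        linarith [habs2 e, hMpos]
  · -- le one
    show x e + t * u e ≤ 1
    rcases le_or_gt (x e) 0 with hc | hc
    · linarith [habs1 e]
    · rcases lt_or_ge (x e) 1 with hc2 | hc2
      · by_cases heE : e ∈ EF G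
        · have hef : e ∈ fracs G x := Finset.mem_filter.mpr ⟨heE, hc, hc2⟩
          have h6 : M ≤ 1 - x e := (hMm1 e hef).trans (min_le_right _ _)
          linarith [habs1 e]
        · rw [hxE e heE] at hc; linarith
      · have hu := h1 e hc2
        have hx1' := hx1 e
        nlinarith
  · -- support
    show x e + t * u e = 0
    rw [hxE e he, h2' e he]
    ring
  · -- degrees
    rw [vdeg_add_smul]
    rcases eq_or_lt_of_le (hxd i) with htight | hslack
    · have hd := h3 i htight
      nlinarith [htight]
    · have hi : i ∈ slacks G b x := Finset.mem_filter.mpr ⟨Finset.mem_univ i, hslack⟩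
      have hm := hMm2 i hi
      have h5 : t * |vdeg G u i| ≤ M := hbound _ (abs_vdeg_le G u i)
      nlinarith [le_abs_self (vdeg G u i), abs_nonneg (vdeg G u i)]

lemma move_lemma (x : Sym2 V → ℝ) (hx : Feas G b x)
    (hmax : ∀ x', Feas G b x' → LL G w x' ≤ LL G w x)
    (hmin : ∀ x', Feas G b x' → LL G w x' = LL G w x → meas G b x ≤ meas G b x')
    (z : Sym2 V → ℝ) (hsupp : ∀ e ∉ fracs G x, z e = 0)
    (hker : ∀ i, vdeg G x i = (b i : ℝ) → vdeg G z i = 0) : z = 0 := by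
  by_contra hzne
  obtain ⟨e₁, hze₁⟩ := Function.ne_iff.mp hzne
  have hze₁' : z e₁ ≠ 0 := by simpa using hze₁
  have hnf1 : ∀ e, 1 ≤ x e → e ∉ fracs G x := by
    intro e he hf
    have := (Finset.mem_filter.mp hf).2
    linarith [this.2]
  have hnf2 : ∀ e, x e ≤ 0 → e ∉ fracs G x := by
    intro e he hf
    have := (Finset.mem_filter.mp hf).2
    linarith [this.1]
  have hz1 : ∀ e, 1 ≤ x e → z e ≤ 0 := fun e he => le_of_eq (hsupp e (hnf1 e he))
  have hz2 : ∀ e, x e ≤ 0 → 0 ≤ z e := fun e he => ge_of_eq (hsupp e (hnf2 e he))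
  have hz2' : ∀ e ∉ EF G, z e = 0 :=
    fun e he => hsupp e (fun hf => he (Finset.mem_filter.mp hf).1)
  have hvneg : ∀ i, vdeg G (fun e => -z e) i = -vdeg G z i := by
    intro i
    simp [vdeg, Finset.sum_neg_distrib]
  have hEz := eps_lemma G b x z hx hz1 hz2 hz2' (fun i hi => le_of_eq (hker i hi))
  have hEnz := eps_lemma G b x (fun e => -z e) hx
    (fun e he => by show -z e ≤ 0; rw [hsupp e (hnf1 e he), neg_zero])
    (fun e he => by show 0 ≤ -z e; rw [hsupp e (hnf2 e he), neg_zero])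
    (fun e he => by show -z e = 0; rw [hz2' e he, neg_zero])
    (fun i hi => by rw [hvneg i, hker i hi, neg_zero])
  set Lz : ℝ := ∑ e ∈ EF G, w e * z e with hLz
  rcases ne_or_eq Lz 0 with hLne | hLeq
  · -- improving direction: contradiction with maximality
    rcases lt_or_gt_of_ne hLne with hneg | hpos
    · obtain ⟨ε, hε, hfeas⟩ := hEnz
      have hF := hfeas ε hε.le le_rfl
      have hle := hmax _ hF
      have hrw : (fun e => x e + ε * -z e) = (fun e => x e + (-ε) * z e) := by
        funext e; ring
      rw [hrw, LL_add_smul, ← hLz] at hle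
      nlinarith
    · obtain ⟨ε, hε, hfeas⟩ := hEz
      have hF := hfeas ε hε.le le_rfl
      have hle := hmax _ hF
      rw [LL_add_smul, ← hLz] at hle
      nlinarith
  · -- neutral direction: push to the boundary
    obtain ⟨ε₀, hε₀, hfeas₀⟩ := hEz
    set TS : Set ℝ := {t : ℝ | 0 ≤ t ∧ Feas G b (fun e => x e + t * z e)} with hTS
    have h0TS : (0:ℝ) ∈ TS := by
      refine ⟨le_rfl, ?_⟩
      have : (fun e => x e + 0 * z e) = x := by funext e; ring
      rw [this]; exact hx
    have hubTS : ∀ t ∈ TS, t ≤ 1 / |z e₁| := by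
      rintro t ⟨ht0, htF⟩
      have h1 := htF.1 e₁
      have h2 := htF.2.1 e₁
      have hx0 := hx.1 e₁
      have hx1 := hx.2.1 e₁
      dsimp only at h1 h2
      rw [le_div_iff₀ (abs_pos.mpr hze₁')]
      rcases lt_or_gt_of_ne hze₁' with hn | hp
      · rw [abs_of_neg hn]; nlinarith
      · rw [abs_of_pos hp]; nlinarith
    have hclosedTS : IsClosed TS := by
      have hcont : Continuous (fun t : ℝ => (fun e => x e + t * z e)) := by
        apply continuous_pi
        intro e
        exact continuous_const.add (continuous_id.mul continuous_const)
      have : TS = Set.Ici (0:ℝ) ∩ ((fun t : ℝ => (fun e => x e + t * z e)) ⁻¹'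
          {y | Feas G b y}) := rfl
      rw [this]
      exact IsClosed.inter isClosed_Ici (IsClosed.preimage hcont (isClosed_feas G b))
    have hcompTS : IsCompact TS := by
      refine IsCompact.of_isClosed_subset (isCompact_Icc (a := (0:ℝ)) (b := 1 / |z e₁|))
        hclosedTS ?_
      intro t ht
      exact ⟨ht.1, hubTS t ht⟩
    have hTSne : TS.Nonempty := ⟨0, h0TS⟩
    set τ : ℝ := sSup TS with hτdef
    have hτTS : τ ∈ TS := hcompTS.sSup_mem hTSne
    have hbddTS : BddAbove TS := hcompTS.bddAbove
    have hτpos : 0 < τ := by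
      have hmem : ε₀ ∈ TS := ⟨hε₀.le, hfeas₀ ε₀ hε₀.le le_rfl⟩
      have := le_csSup hbddTS hmem
      linarith
    set x' : Sym2 V → ℝ := fun e => x e + τ * z e with hx'def
    have hx'F : Feas G b x' := hτTS.2
    have hx'L : LL G w x' = LL G w x := by
      rw [hx'def, LL_add_smul, ← hLz, hLeq]; ring
    have hfr : fracs G x' ⊆ fracs G x := by
      intro e he
      by_contra hne
      have hz0 : z e = 0 := hsupp e hne
      have hmem := Finset.mem_filter.mp he
      have : x' e = x e := by rw [hx'def]; dsimp only; rw [hz0]; ring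
      rw [this] at hmem
      exact hne (Finset.mem_filter.mpr hmem)
    have htight : ∀ i, vdeg G x i = (b i : ℝ) → vdeg G x' i = (b i : ℝ) := by
      intro i hi
      rw [hx'def, vdeg_add_smul, hker i hi, hi]; ring
    have hsl : slacks G b x' ⊆ slacks G b x := by
      intro i hi
      have hmem := Finset.mem_filter.mp hi
      refine Finset.mem_filter.mpr ⟨Finset.mem_univ i, ?_⟩
      rcases eq_or_lt_of_le (hx.2.2.2 i) with ht | hlt
      · rw [htight i ht] at hmem
        exact absurd hmem.2 (lt_irrefl _)
      · exact hlt
    have hmm := hmin x' hx'F hx'L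
    have hfreq : fracs G x' = fracs G x := by
      refine Finset.eq_of_subset_of_card_le hfr ?_
      by_contra hlt
      push_neg at hlt
      have hcs : (slacks G b x').card ≤ (slacks G b x).card := Finset.card_le_card hsl
      have : meas G b x' < meas G b x := by
        unfold meas
        have h1 : (fracs G x').card + 1 ≤ (fracs G x).card := hlt
        have h2 : (slacks G b x').card ≤ Fintype.card V := by
          refine le_trans (Finset.card_le_card (Finset.filter_subset _ _)) ?_
          simp
        nlinarith
      omega
    have hsleq : slacks G b x' = slacks G b x := by
      refine Finset.eq_of_subset_of_card_le hsl ?_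
      by_contra hlt
      push_neg at hlt
      have : meas G b x' < meas G b x := by
        unfold meas
        have h1 : (Fintype.card V + 1) * (fracs G x').card =
            (Fintype.card V + 1) * (fracs G x).card := by rw [hfreq]
        omega
      omega
    -- z supported on fractional edges of x'
    have hzfr : ∀ e, z e ≠ 0 → e ∈ fracs G x' := by
      intro e hz
      rw [hfreq]
      by_contra hne
      exact hz (hsupp e hne)
    have htight' : ∀ i, vdeg G x' i = (b i : ℝ) → vdeg G z i = 0 := by
      intro i hi
      have hns : i ∉ slacks G b x' := by
        intro hmem
        have := (Finset.mem_filter.mp hmem).2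
        rw [hi] at this
        exact lt_irrefl _ this
      rw [hsleq] at hns
      have hnlt : ¬ (vdeg G x i < (b i : ℝ)) := by
        intro hlt
        exact hns (Finset.mem_filter.mpr ⟨Finset.mem_univ i, hlt⟩)
      push_neg at hnlt
      exact hker i (le_antisymm (hx.2.2.2 i) hnlt)
    obtain ⟨ε', hε', hfeas'⟩ := eps_lemma G b x' z hx'F
      (fun e he => by
        by_cases hz : z e = 0
        · exact le_of_eq hz
        · have := (Finset.mem_filter.mp (hzfr e hz)).2.2
          linarith)
      (fun e he => by
        by_cases hz : z e = 0
        · exact ge_of_eq hz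
        · have := (Finset.mem_filter.mp (hzfr e hz)).2.1
          linarith)
      hz2' (fun i hi => le_of_eq (htight' i hi))
    have hmem : τ + ε' ∈ TS := by
      refine ⟨by linarith, ?_⟩
      have hrw : (fun e => x e + (τ + ε') * z e) = (fun e => x' e + ε' * z e) := by
        funext e; rw [hx'def]; ring
      rw [hrw]
      exact hfeas' ε' hε'.le le_rfl
    have := le_csSup hbddTS hmem
    linarith

end Moves

section Structure

variable [Fintype V] [DecidableEq V] (G : SimpleGraph V) (b : V → ℕ) (w : Sym2 V → ℝ)

/-- fractional degree (number of fractional edges at a vertex) -/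
noncomputable def fdeg (x : Sym2 V → ℝ) (i : V) : ℕ :=
  ((fracs G x).filter (fun e => i ∈ e)).card

lemma sym2_pair_eq {e : Sym2 V} (he : ¬ e.IsDiag) :
    ∃ i j : V, i ≠ j ∧ e = s(i, j) ∧
      (univ.filter (fun v => v ∈ e)) = {i, j} := by
  induction e with
  | _ i j =>
    refine ⟨i, j, by simpa using he, rfl, ?_⟩
    ext v
    simp [Sym2.mem_iff]

lemma card_filter_mem_sym2 {e : Sym2 V} (he : ¬ e.IsDiag) :
    (univ.filter (fun v => v ∈ e)).card = 2 := by
  obtain ⟨i, j, hij, -, hset⟩ := sym2_pair_eq he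
  rw [hset, Finset.card_pair hij]

lemma swap_sum {α : Type*} [AddCommMonoid α] (F : Finset (Sym2 V)) (S : Finset V)
    (g : V → Sym2 V → α) :
    ∑ i ∈ S, ∑ e ∈ F.filter (fun e => i ∈ e), g i e
      = ∑ e ∈ F, ∑ i ∈ S.filter (fun i => i ∈ e), g i e := by
  simp_rw [Finset.sum_filter]
  exact Finset.sum_comm

lemma handshake (F : Finset (Sym2 V)) (hF : ∀ e ∈ F, ¬ e.IsDiag) :
    ∑ i, ((F.filter (fun e => i ∈ e)).card) = 2 * F.card := by
  have h1 : ∀ i : V, (F.filter (fun e => i ∈ e)).card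
      = ∑ e ∈ F.filter (fun e => i ∈ e), 1 := by
    intro i; rw [Finset.card_eq_sum_ones]
  simp_rw [h1]
  rw [swap_sum F univ (fun _ _ => 1)]
  have h2 : ∀ e ∈ F, ∑ _i ∈ univ.filter (fun i => i ∈ e), 1
      = (univ.filter (fun v => v ∈ e)).card := by
    intro e _; rw [Finset.card_eq_sum_ones]
  rw [Finset.sum_congr rfl h2]
  rw [Finset.sum_congr rfl (fun e heF => card_filter_mem_sym2 (hF e heF))]
  rw [Finset.sum_const, smul_eq_mul, mul_comm]

lemma tight_frac_int (x : Sym2 V → ℝ) (hx : Feas G b x) (i : V)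
    (hi : vdeg G x i = (b i : ℝ)) :
    ∃ m : ℤ, ∑ e ∈ (fracs G x).filter (fun e => i ∈ e), x e = (b i : ℝ) - m := by
  set A := (EF G).filter (fun e => i ∈ e) with hA
  set Fi := (fracs G x).filter (fun e => i ∈ e) with hFi
  have hsub : Fi ⊆ A := by
    intro e he
    rw [hFi, Finset.mem_filter] at he
    rw [hA, Finset.mem_filter]
    exact ⟨(Finset.mem_filter.mp he.1).1, he.2⟩
  have hsplit : ∑ e ∈ A \ Fi, x e + ∑ e ∈ Fi, x e = ∑ e ∈ A, x e :=
    Finset.sum_sdiff hsub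
  have hzo : ∀ e ∈ A \ Fi, x e = 0 ∨ x e = 1 := by
    intro e he
    rw [Finset.mem_sdiff] at he
    obtain ⟨heA, heFi⟩ := he
    rw [hA, Finset.mem_filter] at heA
    have hnf : e ∉ fracs G x := by
      intro hf
      exact heFi (by rw [hFi, Finset.mem_filter]; exact ⟨hf, heA.2⟩)
    have : ¬ (0 < x e ∧ x e < 1) := by
      intro hc
      exact hnf (Finset.mem_filter.mpr ⟨heA.1, hc⟩)
    rcases lt_or_ge 0 (x e) with h0 | h0
    · right
      rcases lt_or_ge (x e) 1 with h1 | h1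
      · exact absurd ⟨h0, h1⟩ this
      · exact le_antisymm (hx.2.1 e) h1
    · left; exact le_antisymm h0 (hx.1 e)
  have hsum01 : ∑ e ∈ A \ Fi, x e = ((A \ Fi).filter (fun e => x e = 1)).card := by
    rw [Finset.card_filter]
    rw [Finset.sum_congr rfl (fun e he => ?_)]
    · push_cast
      rfl
    · rcases hzo e he with h | h <;> simp [h]
  refine ⟨(((A \ Fi).filter (fun e => x e = 1)).card : ℤ), ?_⟩
  have hvd : vdeg G x i = ∑ e ∈ A, x e := rfl
  push_cast
  rw [← hi, hvd, ← hsplit, hsum01]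
  ring

lemma terminal_structure (x : Sym2 V → ℝ) (hx : Feas G b x)
    (hmove : ∀ z : Sym2 V → ℝ, (∀ e ∉ fracs G x, z e = 0) →
      (∀ i, vdeg G x i = (b i : ℝ) → vdeg G z i = 0) → z = 0) :
    (∀ i, 0 < fdeg G x i →
      (fdeg G x i = 2 ∧ vdeg G x i = (b i : ℝ) ∧
        ∑ e ∈ (fracs G x).filter (fun e => i ∈ e), x e = 1)) ∧
    (∀ e ∈ fracs G x, x e = 1/2) := by
  set F := fracs G x with hF
  set T' := univ.filter (fun i => vdeg G x i = (b i : ℝ) ∧ 0 < fdeg G x i) with hT'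
  -- the incidence map on fractional edges, restricted to tight incident rows
  set Φ : (↥F → ℝ) →ₗ[ℝ] (↥T' → ℝ) :=
    { toFun := fun z => fun i => ∑ e ∈ F.attach, if (i : V) ∈ (e : Sym2 V) then z e else 0
      map_add' := by
        intro y z
        funext i
        simp only [Pi.add_apply, ← Finset.sum_add_distrib]
        refine Finset.sum_congr rfl fun e _ => ?_
        split <;> simp
      map_smul' := by
        intro c z
        funext i
        simp only [Pi.smul_apply, RingHom.id_apply, smul_eq_mul, Finset.mul_sum]
        refine Finset.sum_congr rfl fun e _ => ?_
        split <;> simp } with hΦ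
  -- vdeg of the 0-extension of z is computed by Φ
  have hext : ∀ z : ↥F → ℝ, ∀ i : V,
      vdeg G (fun e => if h : e ∈ F then z ⟨e, h⟩ else 0) i
        = ∑ e ∈ F.attach, if (i : V) ∈ (e : Sym2 V) then z e else 0 := by
    intro z i
    have hFE : F ⊆ EF G := Finset.filter_subset _ _
    have h1 : vdeg G (fun e => if h : e ∈ F then z ⟨e, h⟩ else 0) i
        = ∑ e ∈ F.filter (fun e => i ∈ e), (if h : e ∈ F then z ⟨e, h⟩ else 0) := by
      rw [vdeg]
      rw [Finset.sum_subset (Finset.filter_subset_filter _ hFE)]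
      intro e heE heF
      rw [dif_neg]
      intro heF'
      exact heF (Finset.mem_filter.mpr ⟨heF', (Finset.mem_filter.mp heE).2⟩)
    rw [h1, Finset.sum_filter, ← Finset.sum_attach F
      (fun e => if i ∈ e then (if h : e ∈ F then z ⟨e, h⟩ else 0) else 0)]
    refine Finset.sum_congr rfl fun e _ => ?_
    split
    · rw [dif_pos e.2]
    · rfl
  have hΦinj : Function.Injective Φ := by
    rw [← LinearMap.ker_eq_bot]
    rw [LinearMap.ker_eq_bot']
    intro z hz
    set Z : Sym2 V → ℝ := fun e => if h : e ∈ F then z ⟨e, h⟩ else 0 with hZ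
    have hZ0 : Z = 0 := by
      refine hmove Z (fun e he => dif_neg he) ?_
      intro i hi
      rw [hZ, hext z i]
      by_cases hdi : 0 < fdeg G x i
      · have hiT : i ∈ T' := Finset.mem_filter.mpr ⟨Finset.mem_univ i, hi, hdi⟩
        have := congrFun hz ⟨i, hiT⟩
        simpa [hΦ] using this
      · -- no fractional edges at i
        push_neg at hdi
        rw [Nat.le_zero] at hdi
        have hempty : F.filter (fun e => i ∈ e) = ∅ := Finset.card_eq_zero.mp hdi
        refine Finset.sum_eq_zero fun e he => ?_
        have hie : (i : V) ∉ (e : Sym2 V) := by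
          intro hie
          have hmem : (e : Sym2 V) ∈ F.filter (fun e => i ∈ e) :=
            Finset.mem_filter.mpr ⟨e.2, hie⟩
          rw [hempty] at hmem
          exact absurd hmem (Finset.notMem_empty _)
        rw [if_neg hie]
    funext e
    have := congrFun hZ0 e.1
    rw [hZ] at this
    simpa [dif_pos e.2] using this
  have hcard : F.card ≤ T'.card := by
    have h1 := LinearMap.finrank_le_finrank_of_injective hΦinj
    rw [Module.finrank_pi ℝ, Module.finrank_pi ℝ, Fintype.card_coe, Fintype.card_coe] at h1
    exact h1
  -- tight incident vertices have fractional degree at least 2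
  have hT2 : ∀ i, 0 < fdeg G x i → vdeg G x i = (b i : ℝ) → 2 ≤ fdeg G x i := by
    intro i hdi hti
    by_contra hlt
    push_neg at hlt
    have h : fdeg G x i = 1 := by omega
    · obtain ⟨e₀, he₀⟩ := Finset.card_eq_one.mp h
      obtain ⟨m, hm⟩ := tight_frac_int G b x hx i hti
      rw [he₀, Finset.sum_singleton] at hm
      have he₀F : e₀ ∈ F.filter (fun e => i ∈ e) := by rw [he₀]; exact Finset.mem_singleton_self e₀
      have he₀F' : e₀ ∈ F := (Finset.mem_filter.mp he₀F).1
      have hfr := (Finset.mem_filter.mp he₀F').2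
      have hlow : (0:ℝ) < (b i : ℝ) - m := by rw [← hm]; exact hfr.1
      have hhigh : (b i : ℝ) - m < 1 := by rw [← hm]; exact hfr.2
      have hint1 : ((b i : ℤ) - m : ℤ) < 1 := by
        have : (((b i : ℤ) - m : ℤ) : ℝ) < 1 := by push_cast; linarith
        exact_mod_cast this
      have hint0 : (0:ℤ) < ((b i : ℤ) - m : ℤ) := by
        have : (0:ℝ) < (((b i : ℤ) - m : ℤ) : ℝ) := by push_cast; linarith
        exact_mod_cast this
      omega
  -- counting: all incident vertices are tight with fractional degree exactly 2
  have hHS : ∑ i, fdeg G x i = 2 * F.card := by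
    have : ∀ e ∈ F, ¬ e.IsDiag := fun e he =>
      not_isDiag_of_mem_EF G (Finset.mem_filter.mp he).1
    exact handshake F this
  have hsumT' : ∑ i ∈ T', fdeg G x i ≤ 2 * F.card := by
    rw [← hHS]
    exact Finset.sum_le_sum_of_subset (Finset.subset_univ _)
  have hsumT'2 : 2 * T'.card ≤ ∑ i ∈ T', fdeg G x i := by
    have h2 : ∑ _i ∈ T', 2 ≤ ∑ i ∈ T', fdeg G x i := by
      refine Finset.sum_le_sum fun i hi => ?_
      have hm := Finset.mem_filter.mp hi
      exact hT2 i hm.2.2 hm.2.1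
    simpa [Finset.sum_const, mul_comm] using h2
  have hceq : T'.card = F.card := by omega
  have hsum_eq : ∑ i ∈ T', fdeg G x i = 2 * F.card := by omega
  have hout : ∀ i, i ∉ T' → fdeg G x i = 0 := by
    intro i hiT
    have hsplit : ∑ j ∈ univ \ T', fdeg G x j + ∑ j ∈ T', fdeg G x j
        = ∑ j, fdeg G x j := Finset.sum_sdiff (Finset.subset_univ T')
    have hzero : ∑ j ∈ univ \ T', fdeg G x j = 0 := by omega
    exact (Finset.sum_eq_zero_iff.mp hzero) i
      (Finset.mem_sdiff.mpr ⟨Finset.mem_univ i, hiT⟩)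
  have hdeg2 : ∀ i ∈ T', fdeg G x i = 2 := by
    intro i hi
    by_contra hne
    have h3 : 3 ≤ fdeg G x i := by
      have hm := Finset.mem_filter.mp hi
      have := hT2 i hm.2.2 hm.2.1
      omega
    have hstrict : 2 * T'.card < ∑ i ∈ T', fdeg G x i := by
      have hlt : ∑ _i ∈ T', 2 < ∑ i ∈ T', fdeg G x i := by
        refine Finset.sum_lt_sum (fun j hj => ?_) ⟨i, hi, by omega⟩
        have hm := Finset.mem_filter.mp hj
        exact hT2 j hm.2.2 hm.2.1
      simpa [Finset.sum_const, mul_comm] using hlt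
    omega
  have hkey : ∀ i, 0 < fdeg G x i → fdeg G x i = 2 ∧ vdeg G x i = (b i : ℝ) ∧
      ∑ e ∈ F.filter (fun e => i ∈ e), x e = 1 := by
    intro i hdi
    have hiT : i ∈ T' := by
      by_contra hiT
      rw [hout i hiT] at hdi
      omega
    have hm := Finset.mem_filter.mp hiT
    have hd2 := hdeg2 i hiT
    refine ⟨hd2, hm.2.1, ?_⟩
    obtain ⟨m, hmeq⟩ := tight_frac_int G b x hx i hm.2.1
    obtain ⟨e₁, e₂, hne12, hpair⟩ := Finset.card_eq_two.mp hd2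
    have he₁ : e₁ ∈ F.filter (fun e => i ∈ e) := by rw [hpair]; simp
    have he₂ : e₂ ∈ F.filter (fun e => i ∈ e) := by rw [hpair]; simp
    have hfr₁ := (Finset.mem_filter.mp ((Finset.mem_filter.mp he₁).1)).2
    have hfr₂ := (Finset.mem_filter.mp ((Finset.mem_filter.mp he₂).1)).2
    have hsum : ∑ e ∈ F.filter (fun e => i ∈ e), x e = x e₁ + x e₂ := by
      rw [hpair, Finset.sum_pair hne12]
    rw [hsum] at hmeq ⊢
    have hlow : (0:ℝ) < (b i : ℝ) - m := by rw [← hmeq]; linarith [hfr₁.1, hfr₂.1]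
    have hhigh : (b i : ℝ) - m < 2 := by rw [← hmeq]; linarith [hfr₁.2, hfr₂.2]
    have hint2 : ((b i : ℤ) - m : ℤ) < 2 := by
      have : (((b i : ℤ) - m : ℤ) : ℝ) < 2 := by push_cast; linarith
      exact_mod_cast this
    have hint0 : (0:ℤ) < ((b i : ℤ) - m : ℤ) := by
      have : (0:ℝ) < (((b i : ℤ) - m : ℤ) : ℝ) := by push_cast; linarith
      exact_mod_cast this
    have hint1 : ((b i : ℤ) - m : ℤ) = 1 := by omega
    have : ((b i : ℝ) - m) = 1 := by
      have := congrArg (fun k : ℤ => (k : ℝ)) hint1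
      push_cast at this
      linarith
    linarith [hmeq, this]
  refine ⟨hkey, ?_⟩
  intro e₀ he₀
  set z : Sym2 V → ℝ := fun e => if e ∈ F then x e - 1/2 else 0 with hz
  have hsubF : ∀ i : V, F.filter (fun e => i ∈ e) ⊆ (EF G).filter (fun e => i ∈ e) :=
    fun i => Finset.filter_subset_filter _ (Finset.filter_subset _ _)
  have hz0 : z = 0 := by
    refine hmove z (fun e he => if_neg he) ?_
    intro i hi
    have hstep : ∑ e ∈ F.filter (fun e => i ∈ e), z e
        = ∑ e ∈ (EF G).filter (fun e => i ∈ e), z e := by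
      refine Finset.sum_subset (hsubF i) (fun e heE heF => ?_)
      show z e = 0
      rw [hz]
      dsimp only
      rw [if_neg]
      intro heF'
      exact heF (Finset.mem_filter.mpr ⟨heF', (Finset.mem_filter.mp heE).2⟩)
    have hvz : vdeg G z i = ∑ e ∈ F.filter (fun e => i ∈ e), (x e - 1/2) := by
      rw [vdeg, ← hstep]
      refine Finset.sum_congr rfl fun e heF => ?_
      rw [hz]
      dsimp only
      rw [if_pos (Finset.mem_filter.mp heF).1]
    rw [hvz, Finset.sum_sub_distrib, Finset.sum_const]
    by_cases hdi : 0 < fdeg G x i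
    · obtain ⟨hd2, -, hsum1⟩ := hkey i hdi
      rw [hsum1]
      have : (F.filter (fun e => i ∈ e)).card = 2 := hd2
      rw [this]
      norm_num
    · push_neg at hdi
      rw [Nat.le_zero] at hdi
      have : (F.filter (fun e => i ∈ e)).card = 0 := hdi
      have hempty : F.filter (fun e => i ∈ e) = ∅ := Finset.card_eq_zero.mp this
      rw [hempty]
      simp
  have := congrFun hz0 e₀
  rw [hz] at this
  simp only [if_pos he₀, Pi.zero_apply] at this
  linarith

lemma three_color : ∀ (F : Finset (Sym2 V)), (∀ e ∈ F, ¬ e.IsDiag) →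
    (∀ i : V, (F.filter (fun e => i ∈ e)).card ≤ 2) →
    ∃ f : Sym2 V → Fin 3, ∀ (c : Fin 3) (i : V),
      (F.filter (fun e => f e = c ∧ i ∈ e)).card ≤ 1 := by
  intro F
  induction F using Finset.induction_on with
  | empty =>
    intro _ _
    exact ⟨fun _ => 0, fun c i => by simp⟩
  | insert e Fs hnotmem IH =>
    intro hdiag hdeg
    obtain ⟨f, hf⟩ := IH (fun e' he' => hdiag e' (Finset.mem_insert_of_mem he'))
      (fun i => le_trans (Finset.card_le_card
        (Finset.filter_subset_filter _ (Finset.subset_insert e Fs))) (hdeg i))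
    have hediag : ¬ e.IsDiag := hdiag e (Finset.mem_insert_self e Fs)
    obtain ⟨a, bb, hab, habe, -⟩ := sym2_pair_eq hediag
    have hdega : ∀ v : V, v ∈ e → (Fs.filter (fun e' => v ∈ e')).card ≤ 1 := by
      intro v hv
      have h1 := hdeg v
      rw [Finset.filter_insert, if_pos hv] at h1
      rw [Finset.card_insert_of_notMem (fun hc => hnotmem (Finset.mem_filter.mp hc).1)] at h1
      omega
    set Ca : Finset (Fin 3) := (Fs.filter (fun e' => a ∈ e')).image f with hCa
    set Cb : Finset (Fin 3) := (Fs.filter (fun e' => bb ∈ e')).image f with hCb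
    obtain ⟨c, hc⟩ : ∃ c : Fin 3, c ∉ Ca ∪ Cb := by
      by_contra hcon
      push_neg at hcon
      have hsub : (univ : Finset (Fin 3)) ⊆ Ca ∪ Cb := fun c _ => hcon c
      have h3 : (3:ℕ) ≤ (Ca ∪ Cb).card := by
        have := Finset.card_le_card hsub
        simpa using this
      have hCa1 : Ca.card ≤ 1 :=
        le_trans Finset.card_image_le (hdega a (by rw [habe]; simp))
      have hCb1 : Cb.card ≤ 1 :=
        le_trans Finset.card_image_le (hdega bb (by rw [habe]; simp))
      have := Finset.card_union_le Ca Cb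
      omega
    refine ⟨Function.update f e c, ?_⟩
    intro c' i
    have hsame : Fs.filter (fun e' => Function.update f e c e' = c' ∧ i ∈ e')
        = Fs.filter (fun e' => f e' = c' ∧ i ∈ e') := by
      refine Finset.filter_congr fun e' he' => ?_
      have hne : e' ≠ e := fun hc' => hnotmem (by rwa [hc'] at he')
      rw [Function.update_of_ne hne]
    rw [Finset.filter_insert]
    by_cases hpred : Function.update f e c e = c' ∧ i ∈ e
    · rw [if_pos hpred]
      rw [Function.update_self] at hpred
      have hempty : Fs.filter (fun e' => f e' = c' ∧ i ∈ e') = ∅ := by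
        rw [Finset.eq_empty_iff_forall_notMem]
        intro e' he'
        have hm' := Finset.mem_filter.mp he'
        have he'F := hm'.1
        have hfc' := hm'.2.1
        have hie' := hm'.2.2
        have hiab : i = a ∨ i = bb := by
          rw [habe] at hpred
          have := hpred.2
          rwa [Sym2.mem_iff] at this
        have : c ∈ Ca ∪ Cb := by
          rw [Finset.mem_union]
          rcases hiab with h | h
          · left
            rw [hCa]
            refine Finset.mem_image.mpr ⟨e', Finset.mem_filter.mpr ⟨he'F, h ▸ hie'⟩, ?_⟩
            rw [hfc', hpred.1]
          · right
            rw [hCb]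
            refine Finset.mem_image.mpr ⟨e', Finset.mem_filter.mpr ⟨he'F, h ▸ hie'⟩, ?_⟩
            rw [hfc', hpred.1]
        exact hc this
      rw [Finset.card_insert_of_notMem (fun hcmem => hnotmem (Finset.mem_filter.mp hcmem).1)]
      rw [hsame, hempty]
      simp
    · rw [if_neg hpred, hsame]
      exact hf c' i

lemma third_class (F : Finset (Sym2 V)) (hdiag : ∀ e ∈ F, ¬ e.IsDiag)
    (hdeg : ∀ i : V, (F.filter (fun e => i ∈ e)).card ≤ 2) :
    ∃ N : Finset (Sym2 V), N ⊆ F ∧ (∀ i : V, (N.filter (fun e => i ∈ e)).card ≤ 1) ∧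
      ∑ e ∈ F, w e ≤ 3 * ∑ e ∈ N, w e := by
  obtain ⟨f, hf⟩ := three_color F hdiag hdeg
  have hpart : ∑ c : Fin 3, ∑ e ∈ F.filter (fun e => f e = c), w e = ∑ e ∈ F, w e := by
    rw [Finset.sum_fiberwise_eq_sum_filter F univ f w]
    congr 1
    rw [Finset.filter_true_of_mem]
    intro e _
    exact Finset.mem_univ _
  obtain ⟨c, hcw⟩ : ∃ c : Fin 3, ∑ e ∈ F, w e ≤ 3 * ∑ e ∈ F.filter (fun e => f e = c), w e := by
    by_contra hcon
    push_neg at hcon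
    have h0 := hcon 0
    have h1 := hcon 1
    have h2 := hcon 2
    have := hpart
    rw [Fin.sum_univ_three] at this
    linarith
  refine ⟨F.filter (fun e => f e = c), Finset.filter_subset _ _, ?_, hcw⟩
  intro i
  rw [Finset.filter_filter]
  exact hf c i

/-- the rounding step: from the canonical LP maximizer we extract an integral
b-matching losing at most a factor 2/3. -/
lemma gap_lemma (x : Sym2 V → ℝ) (hx : Feas G b x)
    (hkey : ∀ i, 0 < fdeg G x i →
      (fdeg G x i = 2 ∧ vdeg G x i = (b i : ℝ) ∧
        ∑ e ∈ (fracs G x).filter (fun e => i ∈ e), x e = 1))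
    (hhalf : ∀ e ∈ fracs G x, x e = 1/2)
    (hw : ∀ e ∈ G.edgeSet, 0 < w e) :
    ∃ M : Finset (Sym2 V), IsBMatching G b M ∧ EdgesIn univ M ∧
      2 * LL G w x ≤ 3 * mWeight w M := by
  set F := fracs G x with hF
  set M₁ := (EF G).filter (fun e => 1 ≤ x e) with hM₁
  have hFE : F ⊆ EF G := Finset.filter_subset _ _
  have hM₁E : M₁ ⊆ EF G := Finset.filter_subset _ _
  have hdisj : Disjoint M₁ F := by
    rw [Finset.disjoint_left]
    intro e he hef
    have h1 := (Finset.mem_filter.mp he).2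
    have h2 := (Finset.mem_filter.mp hef).2.2
    linarith
  have hdiagF : ∀ e ∈ F, ¬ e.IsDiag := fun e he => not_isDiag_of_mem_EF G (hFE he)
  have hdegF : ∀ i : V, (F.filter (fun e => i ∈ e)).card ≤ 2 := by
    intro i
    by_cases hdi : 0 < fdeg G x i
    · exact le_of_eq (hkey i hdi).1
    · push_neg at hdi
      rw [Nat.le_zero] at hdi
      exact le_trans (le_of_eq hdi) (by omega)
  obtain ⟨N, hNF, hNdeg, hNw⟩ := third_class w F hdiagF hdegF
  have hNE : N ⊆ EF G := hNF.trans hFE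
  have hdisjN : Disjoint M₁ N := hdisj.mono_right hNF
  -- x is 1 on M₁ and 0 on edges outside M₁ ∪ F
  have hx1 : ∀ e ∈ M₁, x e = 1 := fun e he =>
    le_antisymm (hx.2.1 e) (Finset.mem_filter.mp he).2
  have hx0 : ∀ e ∈ EF G, e ∉ M₁ → e ∉ F → x e = 0 := by
    intro e heE heM heF
    have h1 : ¬ (1 ≤ x e) := fun hc => heM (Finset.mem_filter.mpr ⟨heE, hc⟩)
    push_neg at h1
    rcases lt_or_ge 0 (x e) with h | h
    · exact absurd (Finset.mem_filter.mpr ⟨heE, h, h1⟩) heF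
    · exact le_antisymm h (hx.1 e)
  -- decomposition of sums over EF-related filters
  have hdecomp : ∀ (u : Finset (Sym2 V)) (g : Sym2 V → ℝ), M₁ ∩ u ⊆ u → True →
      True → True := fun _ _ _ _ _ => trivial
  -- vertex degree decomposition
  have hvdeg_dec : ∀ i : V, vdeg G x i
      = ((M₁.filter (fun e => i ∈ e)).card : ℝ)
        + (1/2) * ((F.filter (fun e => i ∈ e)).card : ℝ) := by
    intro i
    set A := (EF G).filter (fun e => i ∈ e) with hA
    set s := M₁.filter (fun e => i ∈ e) with hs
    set t := F.filter (fun e => i ∈ e) with ht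
    have hsA : s ⊆ A := Finset.filter_subset_filter _ hM₁E
    have htA : t ⊆ A := Finset.filter_subset_filter _ hFE
    have hst : Disjoint s t := hdisj.mono (Finset.filter_subset _ _) (Finset.filter_subset _ _)
    have hstA : s ∪ t ⊆ A := Finset.union_subset hsA htA
    have hsplit : ∑ e ∈ A \ (s ∪ t), x e + ∑ e ∈ s ∪ t, x e = ∑ e ∈ A, x e :=
      Finset.sum_sdiff hstA
    have hzero : ∑ e ∈ A \ (s ∪ t), x e = 0 := by
      refine Finset.sum_eq_zero fun e he => ?_
      rw [Finset.mem_sdiff, Finset.mem_union] at he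
      push_neg at he
      have heA := he.1
      have heM : e ∉ s := he.2.1
      have heF : e ∉ t := he.2.2
      have hie := (Finset.mem_filter.mp heA).2
      refine hx0 e (Finset.mem_filter.mp heA).1 ?_ ?_
      · intro hc; exact heM (Finset.mem_filter.mpr ⟨hc, hie⟩)
      · intro hc; exact heF (Finset.mem_filter.mpr ⟨hc, hie⟩)
    have hsums : ∑ e ∈ s, x e = (s.card : ℝ) := by
      rw [Finset.sum_congr rfl (fun e he => hx1 e (Finset.mem_filter.mp he).1)]
      simp [hs]
    have hsumt : ∑ e ∈ t, x e = (1/2) * (t.card : ℝ) := by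
      rw [Finset.sum_congr rfl (fun e he => hhalf e (Finset.mem_filter.mp he).1)]
      simp [mul_comm, ht]
    have hvd : vdeg G x i = ∑ e ∈ A, x e := rfl
    rw [hvd, ← hsplit, hzero, Finset.sum_union hst, hsums, hsumt]
    ring
  -- the integral matching
  refine ⟨M₁ ∪ N, ⟨?_, ?_⟩, fun e _ v _ => Finset.mem_univ v, ?_⟩
  · intro e he
    rcases Finset.mem_union.mp he with h | h
    · exact (mem_EF G).mp (hM₁E h)
    · exact (mem_EF G).mp (hNE h)
  · intro i
    rw [Finset.filter_union]
    have hcard := Finset.card_union_le (M₁.filter (fun e => i ∈ e))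
      (N.filter (fun e => i ∈ e))
    have hNb : (N.filter (fun e => i ∈ e)).card ≤ 1 := hNdeg i
    by_cases hdi : 0 < fdeg G x i
    · obtain ⟨hd2, htight, -⟩ := hkey i hdi
      have hM₁card : ((M₁.filter (fun e => i ∈ e)).card : ℝ) = (b i : ℝ) - 1 := by
        have := hvdeg_dec i
        rw [htight] at this
        have hfd : ((F.filter (fun e => i ∈ e)).card : ℝ) = 2 := by
          exact_mod_cast congrArg (fun n : ℕ => (n : ℝ)) hd2
        rw [hfd] at this
        linarith
      have hM₁nat : (M₁.filter (fun e => i ∈ e)).card + 1 = b i := by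
        have : ((M₁.filter (fun e => i ∈ e)).card : ℝ) + 1 = (b i : ℝ) := by linarith
        exact_mod_cast this
      omega
    · push_neg at hdi
      rw [Nat.le_zero] at hdi
      have hNzero : (N.filter (fun e => i ∈ e)).card = 0 := by
        have hsub : N.filter (fun e => i ∈ e) ⊆ F.filter (fun e => i ∈ e) :=
          Finset.filter_subset_filter _ hNF
        have hle := Finset.card_le_card hsub
        have hdi2 : (F.filter (fun e => i ∈ e)).card = 0 := hdi
        omega
      have hM₁b : ((M₁.filter (fun e => i ∈ e)).card : ℝ) ≤ (b i : ℝ) := by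
        have h1 := hvdeg_dec i
        have h2 := hx.2.2.2 i
        have hfd : ((F.filter (fun e => i ∈ e)).card : ℝ) = 0 := by
          exact_mod_cast congrArg (fun n : ℕ => (n : ℝ)) hdi
        rw [h1, hfd] at h2
        linarith
      have := Nat.cast_le (α := ℝ) |>.mp hM₁b
      omega
  · -- weight bound
    have hLLdec : LL G w x = ∑ e ∈ M₁, w e + (1/2) * ∑ e ∈ F, w e := by
      have hstE : M₁ ∪ F ⊆ EF G := Finset.union_subset hM₁E hFE
      have hsplit : ∑ e ∈ EF G \ (M₁ ∪ F), w e * x e + ∑ e ∈ M₁ ∪ F, w e * x e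
          = ∑ e ∈ EF G, w e * x e := Finset.sum_sdiff hstE
      have hzero : ∑ e ∈ EF G \ (M₁ ∪ F), w e * x e = 0 := by
        refine Finset.sum_eq_zero fun e he => ?_
        rw [Finset.mem_sdiff, Finset.mem_union] at he
        push_neg at he
        rw [hx0 e he.1 he.2.1 he.2.2]
        ring
      have hsums : ∑ e ∈ M₁, w e * x e = ∑ e ∈ M₁, w e := by
        refine Finset.sum_congr rfl fun e he => ?_
        rw [hx1 e he, mul_one]
      have hsumt : ∑ e ∈ F, w e * x e = (1/2) * ∑ e ∈ F, w e := by
        rw [Finset.mul_sum]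
        refine Finset.sum_congr rfl fun e he => ?_
        rw [hhalf e he]
        ring
      rw [LL, ← hsplit, hzero, Finset.sum_union hdisj, hsums, hsumt]
      ring
    have hMw : mWeight w (M₁ ∪ N) = ∑ e ∈ M₁, w e + ∑ e ∈ N, w e := by
      rw [mWeight, Finset.sum_union hdisjN]
    have hM₁pos : 0 ≤ ∑ e ∈ M₁, w e := by
      refine Finset.sum_nonneg fun e he => ?_
      exact (hw e ((mem_EF G).mp (hM₁E he))).le
    rw [hLLdec, hMw]
    linarith

end Structure

section Values

variable [Fintype V] [DecidableEq V] (G : SimpleGraph V) (b : V → ℕ) (w : Sym2 V → ℝ)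

lemma bmatching_subset_EF {M : Finset (Sym2 V)} (hM : IsBMatching G b M) :
    M ⊆ EF G := fun e he => (mem_EF G).mpr (hM.1 e he)

lemma indicator_feas {M : Finset (Sym2 V)} (hM : IsBMatching G b M) :
    Feas G b (fun e => if e ∈ M then (1:ℝ) else 0) := by
  refine ⟨fun e => by show (0:ℝ) ≤ if e ∈ M then 1 else 0; split <;> norm_num,
    fun e => by show (if e ∈ M then (1:ℝ) else 0) ≤ 1; split <;> norm_num,
    fun e he => ?_, fun i => ?_⟩
  · show (if e ∈ M then (1:ℝ) else 0) = 0
    rw [if_neg]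
    intro hc
    exact he (bmatching_subset_EF G b hM hc)
  · have hcount : vdeg G (fun e => if e ∈ M then (1:ℝ) else 0) i
        = ((M.filter (fun e => i ∈ e)).card : ℝ) := by
      rw [vdeg, ← Finset.sum_filter (fun e => e ∈ M) (fun _ => (1:ℝ))]
      rw [Finset.sum_const]
      have hset : ((EF G).filter (fun e => i ∈ e)).filter (fun e => e ∈ M)
          = M.filter (fun e => i ∈ e) := by
        ext e
        simp only [Finset.mem_filter]
        constructor
        · rintro ⟨⟨h1, h2⟩, h3⟩; exact ⟨h3, h2⟩
        · rintro ⟨h1, h2⟩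
          exact ⟨⟨bmatching_subset_EF G b hM h1, h2⟩, h1⟩
      rw [hset]
      simp
    rw [hcount]

    exact_mod_cast hM.2 i

lemma LL_indicator {M : Finset (Sym2 V)} (hM : IsBMatching G b M) :
    LL G w (fun e => if e ∈ M then (1:ℝ) else 0) = mWeight w M := by
  rw [LL, mWeight]
  have h1 : ∀ e ∈ EF G, w e * (if e ∈ M then (1:ℝ) else 0)
      = if e ∈ M then w e else 0 := by
    intro e _
    split <;> ring
  rw [Finset.sum_congr rfl h1, Finset.sum_ite_mem]
  congr 1
  exact Finset.inter_eq_right.mpr (bmatching_subset_EF G b hM)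

lemma zero_mem_bval_set (S : Finset V) :
    (0:ℝ) ∈ {t | ∃ M : Finset (Sym2 V), IsBMatching G b M ∧ EdgesIn S M ∧
      t = mWeight w M} := by
  refine ⟨∅, ⟨fun e he => absurd he (Finset.notMem_empty e), fun i => by simp⟩,
    fun e he => absurd he (Finset.notMem_empty e), ?_⟩
  rw [mWeight, Finset.sum_empty]

lemma bval_set_bddAbove (S : Finset V) :
    BddAbove {t | ∃ M : Finset (Sym2 V), IsBMatching G b M ∧ EdgesIn S M ∧
      t = mWeight w M} := by
  refine ⟨∑ e ∈ EF G, max (w e) 0, ?_⟩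
  rintro t ⟨M, hM, _, rfl⟩
  calc mWeight w M = ∑ e ∈ M, w e := rfl
    _ ≤ ∑ e ∈ M, max (w e) 0 := Finset.sum_le_sum fun e _ => le_max_left _ _
    _ ≤ ∑ e ∈ EF G, max (w e) 0 := Finset.sum_le_sum_of_subset_of_nonneg
        (bmatching_subset_EF G b hM) (fun e _ _ => le_max_right _ _)

lemma bval_nonneg (S : Finset V) : 0 ≤ bVal G b w S :=
  le_csSup (bval_set_bddAbove G b w S) (zero_mem_bval_set G b w S)

lemma bval_le (S : Finset V) (q : ℝ)
    (h : ∀ M : Finset (Sym2 V), IsBMatching G b M → EdgesIn S M → mWeight w M ≤ q) :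
    bVal G b w S ≤ q := by
  refine csSup_le ⟨0, zero_mem_bval_set G b w S⟩ ?_
  rintro t ⟨M, hM, hE, rfl⟩
  exact h M hM hE

lemma le_bval (S : Finset V) (M : Finset (Sym2 V)) (hM : IsBMatching G b M)
    (hE : EdgesIn S M) : mWeight w M ≤ bVal G b w S :=
  le_csSup (bval_set_bddAbove G b w S) ⟨M, hM, hE, rfl⟩

end Values

section FarkasPi

open scoped RealInnerProductSpace in
theorem farkas_pi {κ ι : Type*} [Fintype κ] [Fintype ι] (a : ι → κ → ℝ) (ww : κ → ℝ)
    (h : ∀ u : κ → ℝ, (∀ i, ∑ x, a i x * u x ≤ 0) → ∑ x, ww x * u x ≤ 0) :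
    ∃ y : ι → ℝ, (∀ i, 0 ≤ y i) ∧ ∀ x, ww x = ∑ i, y i * a i x := by
  set le := WithLp.linearEquiv 2 ℝ (κ → ℝ) with hle
  have hinner : ∀ (v : κ → ℝ) (u : EuclideanSpace ℝ κ),
      ⟪le.symm v, u⟫ = ∑ x, v x * u x := by
    intro v u
    rw [PiLp.inner_apply]
    refine Finset.sum_congr rfl fun x _ => ?_
    simp [hle, RCLike.inner_apply, mul_comm]
  have hhyp : ∀ u : EuclideanSpace ℝ κ,
      (∀ i, ⟪le.symm (a i), u⟫ ≤ 0) → ⟪le.symm ww, u⟫ ≤ 0 := by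
    intro u hu
    have h1 : ∀ i, ∑ x, a i x * (le u) x ≤ 0 := by
      intro i
      have := hu i
      rwa [hinner (a i) u] at this
    have h2 := h (le u) h1
    rwa [hinner ww u]
  obtain ⟨y, hy, hsum⟩ := farkas (H := EuclideanSpace ℝ κ)
    (fun i => le.symm (a i)) (le.symm ww) hhyp
  refine ⟨y, hy, fun x => ?_⟩
  have happ := congrArg le hsum
  rw [LinearEquiv.apply_symm_apply, map_sum] at happ
  have hterm : ∀ i, le (y i • le.symm (a i)) = y i • a i := by
    intro i
    rw [map_smul, LinearEquiv.apply_symm_apply]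
  rw [Finset.sum_congr rfl (fun i _ => hterm i)] at happ
  have := congrFun happ x
  rw [this, Finset.sum_apply]
  refine Finset.sum_congr rfl fun i _ => ?_
  simp

end FarkasPi

section Dual

variable [Fintype V] [DecidableEq V] (G : SimpleGraph V) (b : V → ℕ) (w : Sym2 V → ℝ)

lemma exists_dual (x : Sym2 V → ℝ) (hx : Feas G b x)
    (hmax : ∀ x', Feas G b x' → LL G w x' ≤ LL G w x) :
    ∃ (Y : V → ℝ) (Z : Sym2 V → ℝ), (∀ i, 0 ≤ Y i) ∧ (∀ e, 0 ≤ Z e) ∧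
      (∀ e ∈ EF G, w e ≤ (∑ i ∈ univ.filter (fun i => i ∈ e), Y i) + Z e) ∧
      (∑ i, (b i : ℝ) * Y i) + (∑ e ∈ EF G, Z e) = LL G w x := by
  classical
  set a : (V ⊕ (Sym2 V ⊕ Sym2 V)) → Sym2 V → ℝ := fun k => match k with
    | Sum.inl i => fun e' => if vdeg G x i = (b i : ℝ) then
        (if e' ∈ EF G ∧ i ∈ e' then 1 else 0) else 0
    | Sum.inr (Sum.inl e) => fun e' => if (1 ≤ x e ∨ e ∉ EF G) ∧ e' = e then 1 else 0
    | Sum.inr (Sum.inr e) => fun e' => if (x e ≤ 0 ∨ e ∉ EF G) ∧ e' = e then -1 else 0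
    with ha
  set W : Sym2 V → ℝ := fun e => if e ∈ EF G then w e else 0 with hW
  -- single-coordinate sums for the bound constraints
  have hrow1 : ∀ (P : Prop) (_ : Decidable P) (c : ℝ) (u : Sym2 V → ℝ) (e : Sym2 V),
      (∑ e' : Sym2 V, (if P ∧ e' = e then c else 0) * u e')
        = if P then c * u e else 0 := by
    intro P hdec c u e
    have h1 : ∀ e' : Sym2 V, (if P ∧ e' = e then c else 0) * u e'
        = if e' = e then (if P then c * u e' else 0) else 0 := by
      intro e'
      by_cases h1 : P <;> by_cases h2 : e' = e <;> simp [h1, h2]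
    rw [Finset.sum_congr rfl fun e' _ => h1 e']
    rw [Finset.sum_ite_eq' univ e (fun e' => if P then c * u e' else 0)]
    simp
  have hrowv : ∀ (u : Sym2 V → ℝ) (i : V),
      (∑ e' : Sym2 V, a (Sum.inl i) e' * u e')
        = if vdeg G x i = (b i : ℝ) then vdeg G u i else 0 := by
    intro u i
    by_cases ht : vdeg G x i = (b i : ℝ)
    · rw [if_pos ht]
      have h1 : ∀ e' : Sym2 V, a (Sum.inl i) e' * u e'
          = if e' ∈ EF G ∧ i ∈ e' then u e' else 0 := by
        intro e'
        rw [ha]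
        by_cases h2 : e' ∈ EF G ∧ i ∈ e' <;> simp [ht, h2]
      rw [Finset.sum_congr rfl fun e' _ => h1 e']
      rw [vdeg, Finset.sum_filter]
      rw [← Finset.sum_filter (fun e => e ∈ EF G ∧ i ∈ e) u, ← Finset.sum_filter]
      congr 1
      ext e'
      simp [and_comm]
    · rw [if_neg ht]
      refine Finset.sum_eq_zero fun e' _ => ?_
      rw [ha]
      simp [ht]
  -- the Farkas hypothesis holds by maximality
  have hhyp : ∀ u : Sym2 V → ℝ, (∀ k, ∑ e', a k e' * u e' ≤ 0) →
      ∑ e', W e' * u e' ≤ 0 := by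
    intro u hu
    have hub : ∀ e, (1 ≤ x e ∨ e ∉ EF G) → u e ≤ 0 := by
      intro e hP
      have hthis := hu (Sum.inr (Sum.inl e))
      have heq : ∀ e' : Sym2 V, a (Sum.inr (Sum.inl e)) e' * u e'
          = (if (1 ≤ x e ∨ e ∉ EF G) ∧ e' = e then (1:ℝ) else 0) * u e' :=
        fun e' => rfl
      rw [Finset.sum_congr rfl (fun e' _ => heq e'),
        hrow1 (1 ≤ x e ∨ e ∉ EF G) inferInstance 1 u e, if_pos hP, one_mul] at hthis
      exact hthis
    have hlb : ∀ e, (x e ≤ 0 ∨ e ∉ EF G) → 0 ≤ u e := by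
      intro e hP
      have hthis := hu (Sum.inr (Sum.inr e))
      have heq : ∀ e' : Sym2 V, a (Sum.inr (Sum.inr e)) e' * u e'
          = (if (x e ≤ 0 ∨ e ∉ EF G) ∧ e' = e then (-1:ℝ) else 0) * u e' :=
        fun e' => rfl
      rw [Finset.sum_congr rfl (fun e' _ => heq e'),
        hrow1 (x e ≤ 0 ∨ e ∉ EF G) inferInstance (-1) u e, if_pos hP] at hthis
      linarith
    have hrow : ∀ i, vdeg G x i = (b i : ℝ) → vdeg G u i ≤ 0 := by
      intro i hi
      have := hu (Sum.inl i)
      rwa [hrowv u i, if_pos hi] at this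
    have hsupp0 : ∀ e ∉ EF G, u e = 0 :=
      fun e he => le_antisymm (hub e (Or.inr he)) (hlb e (Or.inr he))
    obtain ⟨ε, hε, hfeas⟩ := eps_lemma G b x u hx (fun e he => hub e (Or.inl he))
      (fun e he => hlb e (Or.inl he)) hsupp0 hrow
    have hle := hmax _ (hfeas ε hε.le le_rfl)
    rw [LL_add_smul] at hle
    have hsum : ∑ e' : Sym2 V, W e' * u e' = ∑ e' ∈ EF G, w e' * u e' := by
      have h1 : ∀ e' : Sym2 V, W e' * u e' = if e' ∈ EF G then w e' * u e' else 0 := by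
        intro e'
        rw [hW]
        dsimp only
        split <;> simp
      rw [Finset.sum_congr rfl fun e' _ => h1 e', Finset.sum_ite_mem, Finset.univ_inter]
    rw [hsum]
    nlinarith
  obtain ⟨y, hy, hfar⟩ := farkas_pi a W hhyp
  set Y : V → ℝ := fun i => if vdeg G x i = (b i : ℝ) then y (Sum.inl i) else 0 with hYdef
  set Z : Sym2 V → ℝ := fun e => if (1 ≤ x e ∨ e ∉ EF G) then y (Sum.inr (Sum.inl e))
    else 0 with hZdef
  set U : Sym2 V → ℝ := fun e => if (x e ≤ 0 ∨ e ∉ EF G) then y (Sum.inr (Sum.inr e))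
    else 0 with hUdef
  have hY0 : ∀ i, 0 ≤ Y i := by
    intro i; rw [hYdef]; dsimp only; split
    · exact hy _
    · exact le_rfl
  have hZ0 : ∀ e, 0 ≤ Z e := by
    intro e; rw [hZdef]; dsimp only; split
    · exact hy _
    · exact le_rfl
  have hU0 : ∀ e, 0 ≤ U e := by
    intro e; rw [hUdef]; dsimp only; split
    · exact hy _
    · exact le_rfl
  -- coordinatewise decomposition of the Farkas identity
  have hcoord : ∀ e', W e'
      = (∑ i : V, if e' ∈ EF G ∧ i ∈ e' then Y i else 0) + Z e' - U e' := by
    intro e'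
    rw [hfar e', Fintype.sum_sum_type, Fintype.sum_sum_type]
    have hterm1 : ∀ i : V, y (Sum.inl i) * a (Sum.inl i) e'
        = if e' ∈ EF G ∧ i ∈ e' then Y i else 0 := by
      intro i
      rw [ha, hYdef]
      by_cases ht : vdeg G x i = (b i : ℝ) <;>
        by_cases hm : e' ∈ EF G ∧ i ∈ e' <;> simp [ht, hm]
    have hterm2 : ∀ e : Sym2 V, y (Sum.inr (Sum.inl e)) * a (Sum.inr (Sum.inl e)) e'
        = if e = e' then Z e' else 0 := by
      intro e
      rw [ha, hZdef]
      by_cases he : e = e'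
      · subst he
        by_cases hP : 1 ≤ x e ∨ e ∉ EF G <;> simp [hP]
      · have : ¬ (e' = e) := fun hc => he hc.symm
        simp [this, he]
    have hterm3 : ∀ e : Sym2 V, y (Sum.inr (Sum.inr e)) * a (Sum.inr (Sum.inr e)) e'
        = if e = e' then -U e' else 0 := by
      intro e
      rw [ha, hUdef]
      by_cases he : e = e'
      · subst he
        by_cases hP : x e ≤ 0 ∨ e ∉ EF G <;> simp [hP]
      · have : ¬ (e' = e) := fun hc => he hc.symm
        simp [this, he]
    rw [Finset.sum_congr rfl fun i _ => hterm1 i,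
      Finset.sum_congr rfl fun e _ => hterm2 e,
      Finset.sum_congr rfl fun e _ => hterm3 e,
      Finset.sum_ite_eq' univ e' (fun _ => Z e'),
      Finset.sum_ite_eq' univ e' (fun _ => -U e')]
    simp
    ring
  have hpair : ∀ e ∈ EF G, (∑ i : V, if e ∈ EF G ∧ i ∈ e then Y i else 0)
      = ∑ i ∈ univ.filter (fun i => i ∈ e), Y i := by
    intro e he
    rw [Finset.sum_filter]
    refine Finset.sum_congr rfl fun i _ => ?_
    simp [he]
  refine ⟨Y, Z, hY0, hZ0, ?_, ?_⟩
  · -- cover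
    intro e he
    have h1 := hcoord e
    rw [hW] at h1
    dsimp only at h1
    rw [if_pos he, hpair e he] at h1
    have := hU0 e
    linarith
  · -- objective value
    have obj1 : ∑ i, (b i : ℝ) * Y i
        = ∑ e ∈ EF G, x e * (∑ i ∈ univ.filter (fun i => i ∈ e), Y i) := by
      have h1 : ∀ i, (b i : ℝ) * Y i = Y i * vdeg G x i := by
        intro i
        rw [hYdef]
        dsimp only
        by_cases ht : vdeg G x i = (b i : ℝ)
        · rw [if_pos ht, ht]; ring
        · rw [if_neg ht]; ring
      rw [Finset.sum_congr rfl fun i _ => h1 i]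
      have h2 : ∀ i, Y i * vdeg G x i
          = ∑ e ∈ (EF G).filter (fun e => i ∈ e), Y i * x e := by
        intro i
        rw [vdeg, Finset.mul_sum]
      rw [Finset.sum_congr rfl fun i _ => h2 i]
      rw [swap_sum (EF G) univ (fun i e => Y i * x e)]
      refine Finset.sum_congr rfl fun e _ => ?_
      rw [Finset.mul_sum]
      refine Finset.sum_congr rfl fun i _ => ?_
      ring
    have obj2 : ∑ e ∈ EF G, Z e = ∑ e ∈ EF G, x e * Z e := by
      refine Finset.sum_congr rfl fun e he => ?_
      rw [hZdef]
      dsimp only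
      by_cases hP : 1 ≤ x e ∨ e ∉ EF G
      · have hx1 : x e = 1 := by
          rcases hP with h | h
          · exact le_antisymm (hx.2.1 e) h
          · exact absurd he h
        rw [if_pos hP, hx1, one_mul]
      · rw [if_neg hP, mul_zero]
    have obj3 : ∀ e ∈ EF G, x e * U e = 0 := by
      intro e he
      rw [hUdef]
      dsimp only
      by_cases hP : x e ≤ 0 ∨ e ∉ EF G
      · have hx0 : x e = 0 := by
          rcases hP with h | h
          · exact le_antisymm h (hx.1 e)
          · exact absurd he h
        rw [hx0, zero_mul]
      · rw [if_neg hP, mul_zero]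
    rw [obj1, obj2, ← Finset.sum_add_distrib]
    have hfin : ∀ e ∈ EF G,
        x e * (∑ i ∈ univ.filter (fun i => i ∈ e), Y i) + x e * Z e
          = w e * x e + x e * U e := by
      intro e he
      have h1 := hcoord e
      rw [hW] at h1
      dsimp only at h1
      rw [if_pos he, hpair e he] at h1
      have : (∑ i ∈ univ.filter (fun i => i ∈ e), Y i) + Z e = w e + U e := by
        linarith
      calc x e * (∑ i ∈ univ.filter (fun i => i ∈ e), Y i) + x e * Z e
          = x e * ((∑ i ∈ univ.filter (fun i => i ∈ e), Y i) + Z e) := by ring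
        _ = x e * (w e + U e) := by rw [this]
        _ = w e * x e + x e * U e := by ring
    rw [Finset.sum_congr rfl hfin, Finset.sum_add_distrib]
    rw [Finset.sum_congr rfl obj3, Finset.sum_const, smul_zero, add_zero]
    rfl

end Dual

/-- every `b`-matching game has a non-empty `2/3`-approximate core. -/
theorem statement15 [Fintype V] [DecidableEq V] (G : SimpleGraph V) (b : V → ℕ)
    (hb : ∀ i, 0 < b i) (w : Sym2 V → ℝ) (hw : ∀ e ∈ G.edgeSet, 0 < w e) :
    ∃ x : V → ℝ, (∀ i, 0 ≤ x i) ∧ (∑ i, x i) = bVal G b w Finset.univ ∧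
      ∀ S : Finset V, (2 / 3) * bVal G b w S ≤ ∑ i ∈ S, x i := by
  obtain ⟨x, hxF, hmax, hmin⟩ := exists_good_maximizer G b w
  have hmove := move_lemma G b w x hxF hmax hmin
  obtain ⟨hkey, hhalf⟩ := terminal_structure G b x hxF hmove
  obtain ⟨M, hMb, hME, hMgap⟩ := gap_lemma G b w x hxF hkey hhalf hw
  obtain ⟨Y, Z, hY0, hZ0, hcover, hobj⟩ := exists_dual G b w x hxF hmax
  -- the unscaled dual allocation
  set q : V → ℝ := fun i => (b i : ℝ) * Y i
    + (1/2) * ∑ e ∈ (EF G).filter (fun e => i ∈ e), Z e with hq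
  have hq0 : ∀ i, 0 ≤ q i := by
    intro i
    rw [hq]; dsimp only
    have h1 : 0 ≤ (b i : ℝ) * Y i := mul_nonneg (Nat.cast_nonneg _) (hY0 i)
    have h2 : 0 ≤ ∑ e ∈ (EF G).filter (fun e => i ∈ e), Z e :=
      Finset.sum_nonneg fun e _ => hZ0 e
    linarith
  have hqsum : ∑ i, q i = LL G w x := by
    rw [hq]
    dsimp only
    rw [Finset.sum_add_distrib, ← Finset.mul_sum]
    rw [swap_sum (EF G) univ (fun i e => Z e)]
    have h2 : ∀ e ∈ EF G, ∑ _i ∈ univ.filter (fun i => i ∈ e), Z e = 2 * Z e := by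
      intro e he
      rw [Finset.sum_const, card_filter_mem_sym2 (not_isDiag_of_mem_EF G he),
        nsmul_eq_mul]
      push_cast
      ring
    rw [Finset.sum_congr rfl h2]
    have h3 : (1/2 : ℝ) * ∑ e ∈ EF G, 2 * Z e = ∑ e ∈ EF G, Z e := by
      rw [Finset.mul_sum]
      exact Finset.sum_congr rfl fun e _ => by ring
    rw [h3]
    exact hobj
  have hqS : ∀ S : Finset V, bVal G b w S ≤ ∑ i ∈ S, q i := by
    intro S
    refine bval_le G b w S _ ?_
    intro M' hM' hE'
    have hME' : M' ⊆ EF G := bmatching_subset_EF G b hM'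
    have step1 : mWeight w M'
        ≤ ∑ e ∈ M', ((∑ i ∈ univ.filter (fun i => i ∈ e), Y i) + Z e) :=
      Finset.sum_le_sum fun e he => hcover e (hME' he)
    have hfiltS : ∀ e ∈ M', univ.filter (fun i => i ∈ e) = S.filter (fun i => i ∈ e) := by
      intro e he
      ext i
      simp only [Finset.mem_filter, Finset.mem_univ, true_and]
      exact ⟨fun h => ⟨hE' e he i h, h⟩, fun h => h.2⟩
    have hYpart : ∑ e ∈ M', (∑ i ∈ univ.filter (fun i => i ∈ e), Y i)
        ≤ ∑ i ∈ S, (b i : ℝ) * Y i := by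
      have h1 : ∑ e ∈ M', (∑ i ∈ univ.filter (fun i => i ∈ e), Y i)
          = ∑ i ∈ S, ∑ e ∈ M'.filter (fun e => i ∈ e), Y i := by
        rw [swap_sum M' S (fun i e => Y i)]
        exact Finset.sum_congr rfl fun e he => by rw [hfiltS e he]
      rw [h1]
      refine Finset.sum_le_sum fun i _ => ?_
      rw [Finset.sum_const, nsmul_eq_mul]
      have hcap : (M'.filter (fun e => i ∈ e)).card ≤ b i := hM'.2 i
      have hcap' : ((M'.filter (fun e => i ∈ e)).card : ℝ) ≤ (b i : ℝ) := by
        exact_mod_cast hcap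
      have hy := hY0 i
      nlinarith
    have hZpart : ∑ e ∈ M', Z e
        ≤ ∑ i ∈ S, (1/2) * ∑ e ∈ (EF G).filter (fun e => i ∈ e), Z e := by
      have h1 : ∀ i ∈ S, ∑ e ∈ M'.filter (fun e => i ∈ e), Z e
          ≤ ∑ e ∈ (EF G).filter (fun e => i ∈ e), Z e :=
        fun i _ => Finset.sum_le_sum_of_subset_of_nonneg
          (Finset.filter_subset_filter _ hME') (fun e _ _ => hZ0 e)
      have h2 : ∑ i ∈ S, ∑ e ∈ M'.filter (fun e => i ∈ e), Z e
          = ∑ e ∈ M', 2 * Z e := by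
        rw [swap_sum M' S (fun i e => Z e)]
        refine Finset.sum_congr rfl fun e he => ?_
        rw [← hfiltS e he, Finset.sum_const,
          card_filter_mem_sym2 (not_isDiag_of_mem_EF G (hME' he)), nsmul_eq_mul]
        push_cast
        ring
      have h3 := Finset.sum_le_sum h1
      rw [h2] at h3
      have h4 : ∑ e ∈ M', 2 * Z e = 2 * ∑ e ∈ M', Z e := by
        rw [Finset.mul_sum]
      have h5 : ∑ i ∈ S, (1/2 : ℝ) * ∑ e ∈ (EF G).filter (fun e => i ∈ e), Z e
          = (1/2) * ∑ i ∈ S, ∑ e ∈ (EF G).filter (fun e => i ∈ e), Z e := by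
        rw [Finset.mul_sum]
      rw [h5]
      rw [h4] at h3
      linarith
    calc mWeight w M'
        ≤ ∑ e ∈ M', ((∑ i ∈ univ.filter (fun i => i ∈ e), Y i) + Z e) := step1
      _ = ∑ e ∈ M', (∑ i ∈ univ.filter (fun i => i ∈ e), Y i) + ∑ e ∈ M', Z e :=
          Finset.sum_add_distrib
      _ ≤ ∑ i ∈ S, (b i : ℝ) * Y i
          + ∑ i ∈ S, (1/2) * ∑ e ∈ (EF G).filter (fun e => i ∈ e), Z e :=
          add_le_add hYpart hZpart
      _ = ∑ i ∈ S, q i := by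
          rw [← Finset.sum_add_distrib]
  have hνLL : bVal G b w Finset.univ ≤ LL G w x := by
    refine bval_le G b w Finset.univ _ ?_
    intro M' hM' _
    rw [← LL_indicator G b w hM']
    exact hmax _ (indicator_feas G b hM')
  have hMν : mWeight w M ≤ bVal G b w Finset.univ := le_bval G b w Finset.univ M hMb hME
  have hν0 : 0 ≤ bVal G b w Finset.univ := bval_nonneg G b w Finset.univ
  have hgap : 2 * LL G w x ≤ 3 * bVal G b w Finset.univ := by linarith
  rcases eq_or_lt_of_le hν0 with hz | hpos
  · refine ⟨fun _ => 0, fun i => le_rfl, ?_, ?_⟩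
    · simp [← hz]
    · intro S
      have hSν : bVal G b w S ≤ bVal G b w Finset.univ := by
        refine bval_le G b w S _ ?_
        intro M' hM' _
        exact le_bval G b w Finset.univ M' hM' (fun e _ v _ => Finset.mem_univ v)
      have hS0 := bval_nonneg G b w S
      simp only [Finset.sum_const, smul_zero]
      linarith
  · have hQν : bVal G b w Finset.univ ≤ ∑ i, q i := by rw [hqsum]; exact hνLL
    have hQpos : 0 < ∑ i, q i := lt_of_lt_of_le hpos hQν
    refine ⟨fun i => q i * (bVal G b w Finset.univ / ∑ j, q j), ?_, ?_, ?_⟩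
    · intro i
      exact mul_nonneg (hq0 i) (div_nonneg hν0 hQpos.le)
    · rw [← Finset.sum_mul]
      field_simp
    · intro S
      have h1 := hqS S
      rw [← Finset.sum_mul]
      have hrat : 0 ≤ bVal G b w Finset.univ / ∑ j, q j := div_nonneg hν0 hQpos.le
      have h3 : bVal G b w S * (bVal G b w Finset.univ / ∑ j, q j)
          ≤ (∑ i ∈ S, q i) * (bVal G b w Finset.univ / ∑ j, q j) :=
        mul_le_mul_of_nonneg_right h1 hrat
      have h23 : (2:ℝ)/3 ≤ bVal G b w Finset.univ / ∑ j, q j := by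
        rw [div_le_div_iff₀ (by norm_num) hQpos]
        rw [hqsum]
        linarith
      have hb0 := bval_nonneg G b w S
      nlinarith

end MatchingGames
end

section
/- The difference between the minimum total blocking value and the minimum subsidy of a matching game can be arbitrarily large: for every K > 0 there exists a finite simple graph G=(V,E) with positive edge weights w such that, for the matching game (N,v) on (G,w), β(G,w) − σ(G,w) > K, where σ(G,w) = min{ Σ_{i∈N} y_i : x,y ∈ ℝ^N_{≥0}, x(N) = v(N), and x_i + x_j + y_i + y_j ≥ w(ij) for all ij ∈ E } is the minimum subsidy and β(G,w) = min{ Σ_{ij∈E} max(0, w(ij) − x_i − x_j) : x ∈ ℝ^N_{≥0}, x(N) = v(N) } is the minimum total blocking value. -/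
open scoped Classical
open Finset

namespace MatchingGames

variable {V : Type*}

/-- the sum `x i + x j` of the values of `x` at the two endpoints of an edge. -/
noncomputable def endSum (x : V → ℝ) : Sym2 V → ℝ :=
  Sym2.lift ⟨fun a c => x a + x c, fun _ _ => add_comm _ _⟩

/-- the minimum subsidy `σ(G,w)` of the matching game on `(G,w)`: the least value of
`Σ_i y i` over nonnegative `x, y` such that `x` is an allocation and
`x i + x j + y i + y j ≥ w(ij)` for every edge `ij`. -/
noncomputable def minSubsidy {n : ℕ} (G : SimpleGraph (Fin n))
    (w : Sym2 (Fin n) → ℝ) : ℝ :=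
  sInf {t | ∃ x y : Fin n → ℝ, (∀ i, 0 ≤ x i) ∧ (∀ i, 0 ≤ y i) ∧
    (∑ i, x i) = matchVal G w Finset.univ ∧
    (∀ e ∈ G.edgeSet, w e ≤ endSum x e + endSum y e) ∧ t = ∑ i, y i}

/-- the total blocking value `Σ_{ij ∈ E} max(0, w(ij) - x i - x j)` of a nonnegative
allocation `x`. -/
noncomputable def totalBlockingValue {n : ℕ} (G : SimpleGraph (Fin n))
    (w : Sym2 (Fin n) → ℝ) (x : Fin n → ℝ) : ℝ :=
  ∑ e ∈ Finset.univ.filter (fun e : Sym2 (Fin n) => e ∈ G.edgeSet),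
    max 0 (w e - endSum x e)

/-- the minimum total blocking value `β(G,w)` of the matching game on `(G,w)`. -/
noncomputable def minBlockingValue {n : ℕ} (G : SimpleGraph (Fin n))
    (w : Sym2 (Fin n) → ℝ) : ℝ :=
  sInf {t | ∃ x : Fin n → ℝ, (∀ i, 0 ≤ x i) ∧
    (∑ i, x i) = matchVal G w Finset.univ ∧ t = totalBlockingValue G w x}

@[simp] lemma endSum_mk (x : V → ℝ) (a b : V) : endSum x s(a,b) = x a + x b := rfl

lemma triangle_share : ∀ e f : Sym2 (Fin 3), ¬e.IsDiag → ¬f.IsDiag → e ≠ f →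
    ∃ v, v ∈ e ∧ v ∈ f := by decide

lemma triangle_matchVal_ub {W : ℝ} (hW : 0 ≤ W) :
    ∀ t ∈ {t | ∃ M : Finset (Sym2 (Fin 3)),
      IsMatching (⊤ : SimpleGraph (Fin 3)) M ∧ EdgesIn Finset.univ M ∧
        t = mWeight (fun _ => W) M}, t ≤ W := by
  rintro t ⟨M, hM, -, rfl⟩
  have hcard : M.card ≤ 1 := by
    rw [Finset.card_le_one]
    intro a ha b hb
    by_contra hne
    have hda : ¬ a.IsDiag := by
      have := hM.1 a ha; rwa [SimpleGraph.edgeSet_top] at this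
    have hdb : ¬ b.IsDiag := by
      have := hM.1 b hb; rwa [SimpleGraph.edgeSet_top] at this
    obtain ⟨v, hva, hvb⟩ := triangle_share a b hda hdb hne
    exact hM.2 a ha b hb hne v hva hvb
  have : mWeight (fun _ => W) M = M.card * W := by
    simp [mWeight, Finset.sum_const, nsmul_eq_mul]
  rw [this]
  calc (M.card : ℝ) * W ≤ 1 * W := by
        apply mul_le_mul_of_nonneg_right _ hW
        exact_mod_cast hcard
    _ = W := one_mul W

lemma triangle_matchVal {W : ℝ} (hW : 0 ≤ W) :
    matchVal (⊤ : SimpleGraph (Fin 3)) (fun _ => W) Finset.univ = W := by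
  have hmem : W ∈ {t | ∃ M : Finset (Sym2 (Fin 3)),
      IsMatching (⊤ : SimpleGraph (Fin 3)) M ∧ EdgesIn Finset.univ M ∧
        t = mWeight (fun _ => W) M} := by
    refine ⟨{s((0 : Fin 3), (1 : Fin 3))}, ⟨?_, ?_⟩, ?_, ?_⟩
    · intro e he
      simp only [Finset.mem_singleton] at he
      subst he
      simp
    · intro e he f hf hne
      simp only [Finset.mem_singleton] at he hf
      exact absurd (he.trans hf.symm) hne
    · intro e _ v _; exact Finset.mem_univ v
    · simp [mWeight]
  exact le_antisymm (csSup_le ⟨W, hmem⟩ (triangle_matchVal_ub hW))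
    (le_csSup ⟨W, triangle_matchVal_ub hW⟩ hmem)

/-- the difference between the minimum total blocking value and the
minimum subsidy of a matching game can be arbitrarily large. -/
theorem statement16 (K : ℝ) (hK : 0 < K) :
    ∃ (n : ℕ) (G : SimpleGraph (Fin n)) (w : Sym2 (Fin n) → ℝ),
      (∀ e ∈ G.edgeSet, 0 < w e) ∧
      K < minBlockingValue G w - minSubsidy G w := by
  set W : ℝ := 2 * K + 1 with hWdef
  have hW0 : 0 < W := by linarith
  refine ⟨3, ⊤, fun _ => W, fun _ _ => hW0, ?_⟩
  have hmv : matchVal (⊤ : SimpleGraph (Fin 3)) (fun _ => W) Finset.univ = W :=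
    triangle_matchVal hW0.le
  -- minimum subsidy is at most W/2
  have hσ : minSubsidy (⊤ : SimpleGraph (Fin 3)) (fun _ => W) ≤ W / 2 := by
    apply csInf_le
    · refine ⟨0, ?_⟩
      rintro t ⟨x, y, hx, hy, -, -, rfl⟩
      exact Finset.sum_nonneg fun i _ => hy i
    · refine ⟨![W/2, W/2, 0], ![0, 0, W/2], ?_, ?_, ?_, ?_, ?_⟩
      · intro i; fin_cases i <;> simp <;> linarith
      · intro i; fin_cases i <;> simp <;> linarith
      · rw [hmv, Fin.sum_univ_three]; norm_num; rfl
      · intro e he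
        induction e using Sym2.ind with
        | _ a b =>
          rw [SimpleGraph.mem_edgeSet, SimpleGraph.top_adj] at he
          fin_cases a <;> fin_cases b <;> simp_all [endSum_mk] <;> linarith
      · rw [Fin.sum_univ_three]; simp
  -- minimum blocking value is at least W
  have hβ : W ≤ minBlockingValue (⊤ : SimpleGraph (Fin 3)) (fun _ => W) := by
    apply le_csInf
    · exact ⟨_, ![W, 0, 0], by intro i; fin_cases i <;> simp <;> linarith,
        by rw [hmv, Fin.sum_univ_three]; simp, rfl⟩
    · rintro t ⟨x, hx, hxsum, rfl⟩
      rw [hmv, Fin.sum_univ_three] at hxsum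
      set S : Finset (Sym2 (Fin 3)) :=
        {s((0:Fin 3),(1:Fin 3)), s((0:Fin 3),(2:Fin 3)), s((1:Fin 3),(2:Fin 3))} with hS
      have hsub : S ⊆ Finset.univ.filter
          (fun e : Sym2 (Fin 3) => e ∈ (⊤ : SimpleGraph (Fin 3)).edgeSet) := by
        intro e he
        rw [Finset.mem_filter]
        refine ⟨Finset.mem_univ e, ?_⟩
        fin_cases he <;> simp
      have h1 : ∑ e ∈ S, max 0 ((fun _ => W) e - endSum x e) ≤
          totalBlockingValue (⊤ : SimpleGraph (Fin 3)) (fun _ => W) x := by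
        unfold totalBlockingValue
        refine Finset.sum_le_sum_of_subset_of_nonneg ?_ fun e _ _ => le_max_left _ _
        intro e he
        simp only [Finset.mem_filter, Finset.mem_univ, true_and]
        fin_cases he <;> simp
      have h2 : ∑ e ∈ S, (W - endSum x e) ≤
          ∑ e ∈ S, max 0 ((fun _ => W) e - endSum x e) := by
        apply Finset.sum_le_sum
        intro e _; exact le_max_right _ _
      have h3 : ∑ e ∈ S, (W - endSum x e) = W := by
        rw [hS, Finset.sum_insert (by decide), Finset.sum_insert (by decide),
          Finset.sum_singleton]
        simp only [endSum_mk]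
        linarith
      linarith
  linarith

end MatchingGames
end

section
/- Let (N,v) be a partitioned matching game on a finite simple graph G=(V,E) with positive edge weights w and partition (V_1,…,V_n) of V, of width c ≥ 2. Construct the graph Ḡ with vertex set V ∪ {r_1,…,r_n}, edge set E together with all edges r_i u for u ∈ V_i (1 ≤ i ≤ n), edge weights w̄ equal to w on E and w̄(r_i u) = 2·v(N) on each new edge, and vertex capacities b(u) = 2 for every u ∈ V and b(r_i) = |V_i| for each i. Then the core of the partitioned matching game (N,v) is non-empty if and only if the core of the b-matching game (N̄,v̄) defined on (Ḡ, b, w̄) is non-empty. -/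
open scoped Classical
open Finset

namespace MatchingGames

variable {V : Type*}

/-- the value `v(S)` of a coalition `S ⊆ {1,…,n}` in the partitioned matching game on
`(G,w)` with partition classes `V_i = π⁻¹(i)`: the maximum weight of a matching of the
subgraph of `G` induced by `∪_{i ∈ S} V_i`. -/
noncomputable def pVal {ι : Type*} (G : SimpleGraph V) (w : Sym2 V → ℝ)
    (π : V → ι) (S : Finset ι) : ℝ :=
  sSup {t | ∃ M : Finset (Sym2 V), IsMatching G M ∧
    (∀ e ∈ M, ∀ v : V, v ∈ e → π v ∈ S) ∧ t = mWeight w M}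

/-- the graph `Ḡ`: the graph `G` on `V` together with, for every partition class
`V_i = π⁻¹(i)`, a new vertex `r_i` joined precisely to all vertices of `V_i`. -/
def barG {n : ℕ} (G : SimpleGraph V) (π : V → Fin n) : SimpleGraph (V ⊕ Fin n) where
  Adj a c :=
    match a, c with
    | Sum.inl u, Sum.inl v => G.Adj u v
    | Sum.inl u, Sum.inr i => π u = i
    | Sum.inr i, Sum.inl u => π u = i
    | Sum.inr _, Sum.inr _ => False
  symm := by
    refine ⟨?_⟩
    rintro (u | i) (v | j) h
    · exact h.symm
    · exact h
    · exact h
    · exact h.elim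
  loopless := by
    refine ⟨?_⟩
    rintro (u | i) h
    · exact G.loopless.irrefl u h
    · exact h

/-- the edge weighting `w̄` of `Ḡ`: it agrees with `w` on the edges of `G` and gives
every new edge `r_i u` the weight `t` (which is taken to be `2·v(N)` below). -/
noncomputable def barW {n : ℕ} (w : Sym2 V → ℝ) (t : ℝ) : Sym2 (V ⊕ Fin n) → ℝ :=
  Sym2.lift ⟨fun a c =>
    match a, c with
    | Sum.inl u, Sum.inl v => w s(u, v)
    | Sum.inl _, Sum.inr _ => t
    | Sum.inr _, Sum.inl _ => t
    | Sum.inr _, Sum.inr _ => 0,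
    by
      rintro (u | i) (v | j)
      · exact congrArg w Sym2.eq_swap
      · rfl
      · rfl
      · rfl⟩

/-- the vertex capacities of `Ḡ`: every original vertex `u ∈ V` gets capacity `2` and
every new vertex `r_i` gets capacity `|V_i|`. -/
noncomputable def barB [Fintype V] {n : ℕ} (π : V → Fin n) : V ⊕ Fin n → ℕ :=
  Sum.elim (fun _ => 2)
    (fun i => (Finset.univ.filter (fun v : V => π v = i)).card)

section Helpers

variable {n : ℕ}

lemma bddAbove_weights {α : Type*} [Fintype α] (w : Sym2 α → ℝ)
    (P Q : Finset (Sym2 α) → Prop) :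
    BddAbove {t | ∃ M : Finset (Sym2 α), P M ∧ Q M ∧ t = mWeight w M} := by
  refine BddAbove.mono ?_ (Set.finite_range (mWeight w)).bddAbove
  rintro t ⟨M, _, _, rfl⟩
  exact ⟨M, rfl⟩

lemma mWeight_empty {α : Type*} (w : Sym2 α → ℝ) : mWeight w ∅ = 0 := by
  simp [mWeight]

lemma isMatching_empty (G : SimpleGraph V) : IsMatching G ∅ :=
  ⟨by simp, by simp⟩

lemma isBMatching_empty [DecidableEq V] (G : SimpleGraph V) (b : V → ℕ) :
    IsBMatching G b ∅ := ⟨by simp, fun i => by simp⟩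

lemma le_pVal [Fintype V] {ι : Type*} (G : SimpleGraph V) (w : Sym2 V → ℝ)
    (π : V → ι) (S : Finset ι) (M : Finset (Sym2 V)) (hM : IsMatching G M)
    (hIn : ∀ e ∈ M, ∀ x : V, x ∈ e → π x ∈ S) :
    mWeight w M ≤ pVal G w π S :=
  le_csSup (bddAbove_weights w _ _) ⟨M, hM, hIn, rfl⟩

lemma zero_le_pVal [Fintype V] {ι : Type*} (G : SimpleGraph V) (w : Sym2 V → ℝ)
    (π : V → ι) (S : Finset ι) : 0 ≤ pVal G w π S := by
  simpa [mWeight_empty] using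
    le_pVal G w π S ∅ (isMatching_empty G) (by simp)

lemma pVal_le [Fintype V] {ι : Type*} (G : SimpleGraph V) (w : Sym2 V → ℝ)
    (π : V → ι) (S : Finset ι) (r : ℝ)
    (h : ∀ M : Finset (Sym2 V), IsMatching G M →
      (∀ e ∈ M, ∀ x : V, x ∈ e → π x ∈ S) → mWeight w M ≤ r) :
    pVal G w π S ≤ r := by
  refine csSup_le ⟨0, ∅, isMatching_empty G, by simp, (mWeight_empty w).symm⟩ ?_
  rintro t ⟨M, hM, hIn, rfl⟩
  exact h M hM hIn

lemma le_bVal [Fintype V] [DecidableEq V] (G : SimpleGraph V) (b : V → ℕ)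
    (w : Sym2 V → ℝ) (S : Finset V) (M : Finset (Sym2 V))
    (hM : IsBMatching G b M) (hIn : EdgesIn S M) :
    mWeight w M ≤ bVal G b w S :=
  le_csSup (bddAbove_weights w _ _) ⟨M, hM, hIn, rfl⟩

lemma bVal_le [Fintype V] [DecidableEq V] (G : SimpleGraph V) (b : V → ℕ)
    (w : Sym2 V → ℝ) (S : Finset V) (r : ℝ)
    (h : ∀ M : Finset (Sym2 V), IsBMatching G b M → EdgesIn S M →
      mWeight w M ≤ r) :
    bVal G b w S ≤ r := by
  refine csSup_le ⟨0, ∅, isBMatching_empty G b, fun e he => by simp at he,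
    (mWeight_empty w).symm⟩ ?_
  rintro t ⟨M, hM, hIn, rfl⟩
  exact h M hM hIn

lemma edge_le_pVal [Fintype V] (G : SimpleGraph V) (w : Sym2 V → ℝ)
    (π : V → Fin n) {e : Sym2 V} (he : e ∈ G.edgeSet) :
    w e ≤ pVal G w π Finset.univ := by
  have : mWeight w {e} = w e := by simp [mWeight]
  rw [← this]
  refine le_pVal G w π Finset.univ {e} ⟨by simpa, ?_⟩ (by simp)
  intro a ha b hb hab
  simp only [Finset.mem_singleton] at ha hb
  exact absurd (ha.trans hb.symm) hab

lemma barW_map_inl (w : Sym2 V → ℝ) (t : ℝ) (e : Sym2 V) :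
    barW (n := n) w t (Sym2.map Sum.inl e) = w e := by
  induction e using Sym2.ind with
  | _ a b => rfl

lemma barW_mixed (w : Sym2 V → ℝ) (t : ℝ) (u : V) (i : Fin n) :
    barW w t s(Sum.inl u, Sum.inr i) = t := rfl

lemma not_inr_mem_map_inl (i : Fin n) (e : Sym2 V) :
    Sum.inr i ∉ Sym2.map Sum.inl e := by
  induction e using Sym2.ind with
  | _ a b => simp [Sym2.map_pair_eq, Sym2.mem_iff]

lemma inl_mem_map_inl_iff (u : V) (e : Sym2 V) :
    Sum.inl (β := Fin n) u ∈ Sym2.map Sum.inl e ↔ u ∈ e := by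
  induction e using Sym2.ind with
  | _ a b => simp [Sym2.map_pair_eq, Sym2.mem_iff, Sum.inl.injEq]

lemma barG_edge_cases (G : SimpleGraph V) (π : V → Fin n) {e : Sym2 (V ⊕ Fin n)}
    (he : e ∈ (barG G π).edgeSet) :
    (∃ e' : Sym2 V, e' ∈ G.edgeSet ∧ e = Sym2.map Sum.inl e') ∨
      ∃ u : V, e = s(Sum.inl u, Sum.inr (π u)) := by
  induction e using Sym2.ind with
  | _ a b =>
    rw [SimpleGraph.mem_edgeSet] at he
    rcases a with u | i <;> rcases b with v | j
    · exact Or.inl ⟨s(u, v), he, (Sym2.map_pair_eq _ _ _).symm⟩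
    · exact Or.inr ⟨u, by rw [show π u = j from he]⟩
    · refine Or.inr ⟨v, ?_⟩
      rw [show π v = i from he]
      exact Sym2.eq_swap
    · exact he.elim

end Helpers
section Construct

variable {n : ℕ}

lemma construct_core [Fintype V] [DecidableEq V] (G : SimpleGraph V)
    (w : Sym2 V → ℝ) (π : V → Fin n) (S : Finset (Fin n))
    (Sb : Finset (V ⊕ Fin n))
    (h1 : ∀ u : V, π u ∈ S → Sum.inl u ∈ Sb) (h2 : ∀ i ∈ S, Sum.inr i ∈ Sb)
    (M : Finset (Sym2 V)) (hM : IsMatching G M)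
    (hIn : ∀ e ∈ M, ∀ x : V, x ∈ e → π x ∈ S) (t : ℝ) :
    2 * t * ((Finset.univ.filter fun u : V => π u ∈ S).card : ℝ) + mWeight w M ≤
      bVal (barG G π) (barB π) (barW w (2 * t)) Sb := by
  set Vs : Finset V := Finset.univ.filter fun u : V => π u ∈ S with hVs
  set R : Finset (Sym2 (V ⊕ Fin n)) :=
    Vs.image (fun u => s(Sum.inl u, Sum.inr (π u))) with hR
  set MG : Finset (Sym2 (V ⊕ Fin n)) := M.image (Sym2.map Sum.inl) with hMG
  have injR : Function.Injective (fun u : V => s(Sum.inl u, Sum.inr (π u))) := by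
    intro a b hab
    simp only [Sym2.eq_iff] at hab
    rcases hab with ⟨h, _⟩ | ⟨h, _⟩
    · exact Sum.inl_injective h
    · exact absurd h (by simp)
  have injMG : Function.Injective (Sym2.map (Sum.inl : V → V ⊕ Fin n)) :=
    Sym2.map.injective Sum.inl_injective
  have hdisj : Disjoint R MG := by
    rw [Finset.disjoint_left]
    rintro e he hmg
    rw [hR, Finset.mem_image] at he
    obtain ⟨u, _, rfl⟩ := he
    rw [hMG, Finset.mem_image] at hmg
    obtain ⟨e', _, he'⟩ := hmg
    exact not_inr_mem_map_inl (π u) e' (he' ▸ (by simp [Sym2.mem_iff]))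
  -- the combined b-matching
  have hBM : IsBMatching (barG G π) (barB π) (R ∪ MG) := by
    constructor
    · intro e he
      rcases Finset.mem_union.mp he with he | he
      · rw [hR, Finset.mem_image] at he
        obtain ⟨u, _, rfl⟩ := he
        rw [SimpleGraph.mem_edgeSet]
        show π u = π u
        rfl
      · rw [hMG, Finset.mem_image] at he
        obtain ⟨e', he', rfl⟩ := he
        have := hM.1 e' he'
        induction e' using Sym2.ind with
        | _ a b =>
          rw [Sym2.map_pair_eq, SimpleGraph.mem_edgeSet]
          rw [SimpleGraph.mem_edgeSet] at this
          exact this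
    · intro a
      rw [Finset.filter_union]
      refine le_trans (Finset.card_union_le _ _) ?_
      rcases a with u | i
      · -- at inl u : ≤ 1 + 1 = 2
        have hc1 : (R.filter fun e => Sum.inl u ∈ e).card ≤ 1 := by
          rw [Finset.card_le_one]
          intro a ha b hb
          simp only [Finset.mem_filter, hR, Finset.mem_image] at ha hb
          obtain ⟨⟨u1, _, rfl⟩, hu1⟩ := ha
          obtain ⟨⟨u2, _, rfl⟩, hu2⟩ := hb
          have e1 : u = u1 := by
            rcases Sym2.mem_iff.mp hu1 with h | h
            · exact Sum.inl_injective h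
            · exact absurd h (by simp)
          have e2 : u = u2 := by
            rcases Sym2.mem_iff.mp hu2 with h | h
            · exact Sum.inl_injective h
            · exact absurd h (by simp)
          rw [← e1, ← e2]
        have hc2 : (MG.filter fun e => Sum.inl u ∈ e).card ≤ 1 := by
          rw [Finset.card_le_one]
          intro a ha b hb
          simp only [Finset.mem_filter, hMG, Finset.mem_image] at ha hb
          obtain ⟨⟨e1, he1, rfl⟩, hu1⟩ := ha
          obtain ⟨⟨e2, he2, rfl⟩, hu2⟩ := hb
          rw [inl_mem_map_inl_iff] at hu1 hu2
          congr 1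
          by_contra hne
          exact hM.2 e1 he1 e2 he2 hne u hu1 hu2
        calc (R.filter fun e => Sum.inl u ∈ e).card +
            (MG.filter fun e => Sum.inl u ∈ e).card ≤ 1 + 1 := add_le_add hc1 hc2
          _ ≤ barB π (Sum.inl u) := le_refl _
      · -- at inr i
        have hc2 : (MG.filter fun e => Sum.inr i ∈ e).card = 0 := by
          rw [Finset.card_eq_zero, Finset.filter_eq_empty_iff]
          intro e he
          rw [hMG, Finset.mem_image] at he
          obtain ⟨e', _, rfl⟩ := he
          exact not_inr_mem_map_inl i e'
        have hc1 : (R.filter fun e => Sum.inr i ∈ e).card ≤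
            (Finset.univ.filter fun u : V => π u = i).card := by
          have hsub : (R.filter fun e => Sum.inr i ∈ e) ⊆
              (Finset.univ.filter fun u : V => π u = i).image
                (fun u => s(Sum.inl u, Sum.inr (π u))) := by
            intro e he
            simp only [Finset.mem_filter, hR, Finset.mem_image] at he
            obtain ⟨⟨u, hu, rfl⟩, hiu⟩ := he
            have hpi : π u = i := by
              rcases Sym2.mem_iff.mp hiu with h | h
              · exact absurd h (by simp)
              · exact (Sum.inr_injective h).symm
            exact Finset.mem_image.mpr ⟨u, by simp [hpi], rfl⟩
          exact le_trans (Finset.card_le_card hsub) Finset.card_image_le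
        calc (R.filter fun e => Sum.inr i ∈ e).card +
            (MG.filter fun e => Sum.inr i ∈ e).card
            ≤ (Finset.univ.filter fun u : V => π u = i).card + 0 := add_le_add hc1 hc2.le
          _ = barB π (Sum.inr i) := by simp [barB]
  have hEdges : EdgesIn Sb (R ∪ MG) := by
    intro e he a ha
    rcases Finset.mem_union.mp he with he | he
    · rw [hR, Finset.mem_image] at he
      obtain ⟨u, hu, rfl⟩ := he
      have hπu : π u ∈ S := (Finset.mem_filter.mp hu).2
      rcases Sym2.mem_iff.mp ha with h | h
      · rw [h]; exact h1 u hπu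
      · rw [h]; exact h2 _ hπu
    · rw [hMG, Finset.mem_image] at he
      obtain ⟨e', he', rfl⟩ := he
      induction e' using Sym2.ind with
      | _ p q =>
        rw [Sym2.map_pair_eq, Sym2.mem_iff] at ha
        rcases ha with h | h
        · rw [h]; exact h1 p (hIn _ he' p (Sym2.mem_mk_left p q))
        · rw [h]; exact h1 q (hIn _ he' q (Sym2.mem_mk_right p q))
  have hweight : mWeight (barW w (2 * t)) (R ∪ MG) =
      2 * t * (Vs.card : ℝ) + mWeight w M := by
    rw [mWeight, Finset.sum_union hdisj]
    congr 1
    · rw [hR, Finset.sum_image (fun a _ b _ h => injR h)]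
      simp [barW_mixed, mul_comm]
    · rw [hMG, Finset.sum_image (fun a _ b _ h => injMG h), mWeight]
      exact Finset.sum_congr rfl fun e _ => barW_map_inl w (2 * t) e
  calc 2 * t * (Vs.card : ℝ) + mWeight w M
      = mWeight (barW w (2 * t)) (R ∪ MG) := hweight.symm
    _ ≤ _ := le_bVal _ _ _ _ _ hBM hEdges

lemma construct_bound [Fintype V] [DecidableEq V] (G : SimpleGraph V)
    (w : Sym2 V → ℝ) (π : V → Fin n) (S : Finset (Fin n))
    (Sb : Finset (V ⊕ Fin n))
    (h1 : ∀ u : V, π u ∈ S → Sum.inl u ∈ Sb) (h2 : ∀ i ∈ S, Sum.inr i ∈ Sb) :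
    2 * pVal G w π Finset.univ *
        ((Finset.univ.filter fun u : V => π u ∈ S).card : ℝ) + pVal G w π S ≤
      bVal (barG G π) (barB π) (barW w (2 * pVal G w π Finset.univ)) Sb := by
  set v := pVal G w π Finset.univ
  set c : ℝ := ((Finset.univ.filter fun u : V => π u ∈ S).card : ℝ)
  have key : pVal G w π S ≤
      bVal (barG G π) (barB π) (barW w (2 * v)) Sb - 2 * v * c := by
    refine pVal_le G w π S _ fun M hM hIn => ?_
    have := construct_core G w π S Sb h1 h2 M hM hIn v
    linarith
  linarith
end Construct
section Decomp

variable {n : ℕ}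

lemma decomp_bound [Fintype V] [DecidableEq V] (G : SimpleGraph V)
    (w : Sym2 V → ℝ) (π : V → Fin n)
    (Sb : Finset (V ⊕ Fin n)) (Mb : Finset (Sym2 (V ⊕ Fin n)))
    (hBM : IsBMatching (barG G π) (barB π) Mb) (hIn : EdgesIn Sb Mb) :
    mWeight (barW w (2 * pVal G w π Finset.univ)) Mb ≤
      2 * pVal G w π Finset.univ * (Sb.toLeft.card : ℝ) +
        pVal G w π Sb.toRight := by
  classical
  set v := pVal G w π Finset.univ with hv
  have hv0 : 0 ≤ v := zero_le_pVal G w π Finset.univ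
  have hedge : ∀ e ∈ G.edgeSet, w e ≤ v := fun e he => edge_le_pVal G w π he
  set A : Finset V :=
    Finset.univ.filter (fun u : V => s(Sum.inl u, Sum.inr (π u)) ∈ Mb) with hA
  have hAmem : ∀ u : V, u ∈ A ↔ s(Sum.inl u, Sum.inr (π u)) ∈ Mb := by
    intro u; simp [hA]
  -- split Mb into r-edges and G-edges
  set p : Sym2 (V ⊕ Fin n) → Prop := fun e => ∃ i : Fin n, Sum.inr i ∈ e with hp
  have hsplit : mWeight (barW w (2 * v)) Mb =
      mWeight (barW w (2 * v)) (Mb.filter p) +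
      mWeight (barW w (2 * v)) (Mb.filter fun e => ¬ p e) := by
    rw [mWeight, mWeight, mWeight, Finset.sum_filter_add_sum_filter_not]
  -- the r-edge part
  have hR : Mb.filter p = A.image (fun u => s(Sum.inl u, Sum.inr (π u))) := by
    ext e
    simp only [Finset.mem_filter, Finset.mem_image]
    constructor
    · rintro ⟨heMb, i, hi⟩
      rcases barG_edge_cases G π (hBM.1 e heMb) with ⟨e', _, rfl⟩ | ⟨u, rfl⟩
      · exact absurd hi (not_inr_mem_map_inl i e')
      · exact ⟨u, (hAmem u).mpr heMb, rfl⟩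
    · rintro ⟨u, hu, rfl⟩
      exact ⟨(hAmem u).mp hu, π u, by simp [Sym2.mem_iff]⟩
  have injR : Function.Injective (fun u : V => s(Sum.inl u, Sum.inr (π u))) := by
    intro a b hab
    simp only [Sym2.eq_iff] at hab
    rcases hab with ⟨h, _⟩ | ⟨h, _⟩
    · exact Sum.inl_injective h
    · exact absurd h (by simp)
  have hwR : mWeight (barW w (2 * v)) (Mb.filter p) = 2 * v * (A.card : ℝ) := by
    rw [hR, mWeight, Finset.sum_image (fun a _ b _ h => injR h)]
    simp [barW_mixed, mul_comm]
  -- the G-edge part, pulled back to Sym2 V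
  set M' : Finset (Sym2 V) :=
    Finset.univ.filter (fun e : Sym2 V => Sym2.map Sum.inl e ∈ Mb) with hM'
  have injMG : Function.Injective (Sym2.map (Sum.inl : V → V ⊕ Fin n)) :=
    Sym2.map.injective Sum.inl_injective
  have hMG : Mb.filter (fun e => ¬ p e) = M'.image (Sym2.map Sum.inl) := by
    ext e
    simp only [Finset.mem_filter, Finset.mem_image, hM', Finset.mem_univ, true_and]
    constructor
    · rintro ⟨heMb, hnp⟩
      rcases barG_edge_cases G π (hBM.1 e heMb) with ⟨e', _, rfl⟩ | ⟨u, rfl⟩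
      · exact ⟨e', heMb, rfl⟩
      · exact absurd ⟨π u, by simp [Sym2.mem_iff]⟩ hnp
    · rintro ⟨e', he', rfl⟩
      refine ⟨he', ?_⟩
      rintro ⟨i, hi⟩
      exact not_inr_mem_map_inl i e' hi
  have hM'G : ∀ e ∈ M', e ∈ G.edgeSet := by
    intro e he
    rw [hM', Finset.mem_filter] at he
    rcases barG_edge_cases G π (hBM.1 _ he.2) with ⟨e', he', heq⟩ | ⟨u, heq⟩
    · rwa [injMG heq]
    · exfalso
      have : Sum.inr (π u) ∈ Sym2.map (Sum.inl : V → V ⊕ Fin n) e := by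
        rw [heq]; simp [Sym2.mem_iff]
      exact not_inr_mem_map_inl (π u) e this
  have hM'Sb : ∀ e ∈ M', ∀ x : V, x ∈ e → x ∈ Sb.toLeft := by
    intro e he x hx
    rw [hM', Finset.mem_filter] at he
    rw [Finset.mem_toLeft]
    exact hIn _ he.2 _ ((inl_mem_map_inl_iff x e).mpr hx)
  have hdeg : ∀ u : V, (M'.filter fun e => u ∈ e).card ≤
      (Mb.filter fun e => Sum.inl u ∈ e).card := by
    intro u
    refine Finset.card_le_card_of_injOn (Sym2.map Sum.inl) ?_
      (fun a _ b _ h => injMG h)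
    intro e he
    rw [Finset.mem_coe, Finset.mem_filter] at he ⊢
    rw [hM', Finset.mem_filter] at he
    exact ⟨he.1.2, (inl_mem_map_inl_iff u e).mpr he.2⟩
  have hdeg2 : ∀ u : V, (M'.filter fun e => u ∈ e).card ≤ 2 :=
    fun u => le_trans (hdeg u) (hBM.2 (Sum.inl u))
  have hwMG : mWeight (barW w (2 * v)) (Mb.filter fun e => ¬ p e) =
      mWeight w M' := by
    rw [hMG, mWeight, Finset.sum_image (fun a _ b _ h => injMG h), mWeight]
    exact Finset.sum_congr rfl fun e _ => barW_map_inl w (2 * v) e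
  -- split M' into M₁ (both ends r-matched) and M₂
  set q : Sym2 V → Prop := fun e => ∀ x ∈ e, x ∈ A with hq
  have hsplit2 : mWeight w M' =
      mWeight w (M'.filter q) + mWeight w (M'.filter fun e => ¬ q e) := by
    rw [mWeight, mWeight, mWeight, Finset.sum_filter_add_sum_filter_not]
  -- M₁ is a matching whose classes lie in Sb.toRight
  have hM1 : IsMatching G (M'.filter q) := by
    refine ⟨fun e he => hM'G e (Finset.mem_filter.mp he).1, ?_⟩
    intro e he f hf hef u hue huf
    have hA' : u ∈ A := (Finset.mem_filter.mp he).2 u hue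
    have hrMb : s(Sum.inl u, Sum.inr (π u)) ∈ Mb := (hAmem u).mp hA'
    have heMb : Sym2.map Sum.inl e ∈ Mb :=
      (Finset.mem_filter.mp ((Finset.mem_filter.mp he).1)).2
    have hfMb : Sym2.map Sum.inl f ∈ Mb :=
      (Finset.mem_filter.mp ((Finset.mem_filter.mp hf).1)).2
    have h3 : ({Sym2.map Sum.inl e, Sym2.map Sum.inl f,
        s(Sum.inl u, Sum.inr (π u))} : Finset (Sym2 (V ⊕ Fin n))) ⊆
        Mb.filter fun e' => Sum.inl u ∈ e' := by
      intro a ha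
      simp only [Finset.mem_insert, Finset.mem_singleton] at ha
      rw [Finset.mem_filter]
      rcases ha with rfl | rfl | rfl
      · exact ⟨heMb, (inl_mem_map_inl_iff u e).mpr hue⟩
      · exact ⟨hfMb, (inl_mem_map_inl_iff u f).mpr huf⟩
      · exact ⟨hrMb, by simp [Sym2.mem_iff]⟩
    have hne1 : Sym2.map (Sum.inl : V → V ⊕ Fin n) e ≠ Sym2.map Sum.inl f :=
      fun h => hef (injMG h)
    have hne2 : Sym2.map (Sum.inl : V → V ⊕ Fin n) e ≠
        s(Sum.inl u, Sum.inr (π u)) := by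
      intro h
      exact not_inr_mem_map_inl (π u) e (h ▸ (by simp [Sym2.mem_iff]))
    have hne3 : Sym2.map (Sum.inl : V → V ⊕ Fin n) f ≠
        s(Sum.inl u, Sum.inr (π u)) := by
      intro h
      exact not_inr_mem_map_inl (π u) f (h ▸ (by simp [Sym2.mem_iff]))
    have hcard3 : ({Sym2.map Sum.inl e, Sym2.map Sum.inl f,
        s(Sum.inl u, Sum.inr (π u))} : Finset (Sym2 (V ⊕ Fin n))).card = 3 := by
      rw [Finset.card_insert_of_notMem (by simp [hne1, hne2]),
        Finset.card_insert_of_notMem (by simp [hne3]), Finset.card_singleton]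
    have := le_trans (le_of_eq hcard3.symm)
      (le_trans (Finset.card_le_card h3) (hBM.2 (Sum.inl u)))
    have hb2 : barB π (Sum.inl u) = 2 := rfl
    omega
  have hM1In : ∀ e ∈ M'.filter q, ∀ x : V, x ∈ e → π x ∈ Sb.toRight := by
    intro e he x hx
    have hA' : x ∈ A := (Finset.mem_filter.mp he).2 x hx
    have : s(Sum.inl x, Sum.inr (π x)) ∈ Mb := (hAmem x).mp hA'
    rw [Finset.mem_toRight]
    exact hIn _ this _ (by simp [Sym2.mem_iff])
  have hwM1 : mWeight w (M'.filter q) ≤ pVal G w π Sb.toRight :=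
    le_pVal G w π Sb.toRight _ hM1 hM1In
  -- bound on M₂ via free vertices
  set F : Finset V := Sb.toLeft \ A with hF
  have hASb : A ⊆ Sb.toLeft := by
    intro u hu
    rw [Finset.mem_toLeft]
    exact hIn _ ((hAmem u).mp hu) _ (by simp [Sym2.mem_iff])
  have hM2sub : (M'.filter fun e => ¬ q e) ⊆
      F.biUnion (fun u => M'.filter fun e => u ∈ e) := by
    intro e he
    rw [Finset.mem_filter] at he
    obtain ⟨he', hnq⟩ := he
    obtain ⟨x, hxe, hxA⟩ : ∃ x ∈ e, x ∉ A := by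
      by_contra hcon
      push_neg at hcon
      exact hnq (fun x hx => hcon x hx)
    refine Finset.mem_biUnion.mpr ⟨x, ?_, Finset.mem_filter.mpr ⟨he', hxe⟩⟩
    rw [hF, Finset.mem_sdiff]
    exact ⟨hM'Sb e he' x hxe, hxA⟩
  have hM2card : (M'.filter fun e => ¬ q e).card ≤ 2 * F.card := by
    refine le_trans (Finset.card_le_card hM2sub) ?_
    refine le_trans (Finset.card_biUnion_le) ?_
    calc ∑ u ∈ F, (M'.filter fun e => u ∈ e).card
        ≤ ∑ _u ∈ F, 2 := Finset.sum_le_sum fun u _ => hdeg2 u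
      _ = 2 * F.card := by rw [Finset.sum_const, smul_eq_mul, mul_comm]
  have hwM2 : mWeight w (M'.filter fun e => ¬ q e) ≤ 2 * v * (F.card : ℝ) := by
    have h1 : mWeight w (M'.filter fun e => ¬ q e) ≤
        ((M'.filter fun e => ¬ q e).card : ℝ) * v := by
      rw [mWeight]
      calc ∑ e ∈ M'.filter fun e => ¬ q e, w e
          ≤ ∑ _e ∈ M'.filter fun e => ¬ q e, v :=
            Finset.sum_le_sum fun e he =>
              hedge e (hM'G e (Finset.mem_filter.mp he).1)
        _ = _ := by rw [Finset.sum_const, nsmul_eq_mul]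
    have h2 : (((M'.filter fun e => ¬ q e).card : ℝ)) * v ≤
        (2 * (F.card : ℝ)) * v := by
      apply mul_le_mul_of_nonneg_right _ hv0
      exact_mod_cast hM2card
    calc mWeight w (M'.filter fun e => ¬ q e) ≤ _ := h1
      _ ≤ (2 * (F.card : ℝ)) * v := h2
      _ = 2 * v * (F.card : ℝ) := by ring
  have hFcard : (F.card : ℝ) = (Sb.toLeft.card : ℝ) - (A.card : ℝ) := by
    rw [hF, Finset.card_sdiff_of_subset hASb]
    have := Finset.card_le_card hASb
    push_cast [Nat.cast_sub this]
    ring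
  have hAcard : (A.card : ℝ) ≤ (Sb.toLeft.card : ℝ) := by
    exact_mod_cast Finset.card_le_card hASb
  calc mWeight (barW w (2 * v)) Mb
      = 2 * v * (A.card : ℝ) + mWeight w M' := by rw [hsplit, hwR, hwMG]
    _ = 2 * v * (A.card : ℝ) + mWeight w (M'.filter q) +
        mWeight w (M'.filter fun e => ¬ q e) := by rw [hsplit2]; ring
    _ ≤ 2 * v * (A.card : ℝ) + pVal G w π Sb.toRight + 2 * v * (F.card : ℝ) := by
        linarith
    _ ≤ 2 * v * (Sb.toLeft.card : ℝ) + pVal G w π Sb.toRight := by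
        rw [hFcard]; nlinarith
end Decomp
section Final

variable {n : ℕ}

lemma sum_split {α β : Type*} (f : α ⊕ β → ℝ) (S : Finset (α ⊕ β)) :
    ∑ a ∈ S, f a =
      ∑ u ∈ S.toLeft, f (Sum.inl u) + ∑ i ∈ S.toRight, f (Sum.inr i) := by
  rw [← Finset.sum_disjSum, Finset.toLeft_disjSum_toRight]

lemma sum_univ_split {α β : Type*} [Fintype α] [Fintype β] (f : α ⊕ β → ℝ) :
    ∑ a : α ⊕ β, f a = ∑ u : α, f (Sum.inl u) + ∑ i : β, f (Sum.inr i) := by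
  rw [← Finset.univ_disjSum_univ, Finset.sum_disjSum]

lemma bVal_univ_eq [Fintype V] [DecidableEq V] (G : SimpleGraph V)
    (w : Sym2 V → ℝ) (π : V → Fin n) :
    bVal (barG G π) (barB π) (barW w (2 * pVal G w π Finset.univ))
        Finset.univ =
      2 * pVal G w π Finset.univ * (Fintype.card V : ℝ) +
        pVal G w π Finset.univ := by
  set v := pVal G w π Finset.univ with hv
  have htL : (Finset.univ : Finset (V ⊕ Fin n)).toLeft = Finset.univ := by
    ext u; simp
  have htR : (Finset.univ : Finset (V ⊕ Fin n)).toRight = Finset.univ := by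
    ext i; simp
  apply le_antisymm
  · refine bVal_le _ _ _ _ _ fun Mb hBM hIn => ?_
    have := decomp_bound G w π Finset.univ Mb hBM hIn
    rw [htL, htR, Finset.card_univ] at this
    exact this
  · have h := construct_bound G w π Finset.univ Finset.univ
      (fun _ _ => Finset.mem_univ _) (fun _ _ => Finset.mem_univ _)
    have hfil : (Finset.univ.filter fun u : V => π u ∈ Finset.univ) =
        Finset.univ := by simp
    rw [hfil, Finset.card_univ] at h
    exact h

end Final
/-- for a partitioned matching game `(N,v)` of width `c ≥ 2` on `(G,w)`
with partition `(V_1,…,V_n)` given by `π`, the core of `(N,v)` is non-empty if and only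
if the core of the `b`-matching game on `(Ḡ, b, w̄)` is non-empty, where `Ḡ`, `w̄`
(new edges having weight `2·v(N)`) and `b` are as constructed above. -/
theorem statement17 [Fintype V] [DecidableEq V] {n : ℕ} (G : SimpleGraph V)
    (w : Sym2 V → ℝ) (hw : ∀ e ∈ G.edgeSet, 0 < w e) (π : V → Fin n)
    (hπ : Function.Surjective π)
    (hc : 2 ≤ Finset.univ.sup fun i : Fin n =>
      (Finset.univ.filter (fun v : V => π v = i)).card) :
    (∃ x : Fin n → ℝ, InCore (pVal G w π) x) ↔
      ∃ y : V ⊕ Fin n → ℝ,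
        InCore (bVal (barG G π) (barB π)
          (barW w (2 * pVal G w π Finset.univ))) y := by
  set v := pVal G w π Finset.univ with hv
  constructor
  · rintro ⟨x, hx1, hx2⟩
    refine ⟨Sum.elim (fun _ => 2 * v) x, ?_, ?_⟩
    · rw [sum_univ_split, bVal_univ_eq]
      simp only [Sum.elim_inl, Sum.elim_inr, Finset.sum_const, Finset.card_univ,
        nsmul_eq_mul]
      rw [hx1]
      ring
    · intro Sb
      refine bVal_le _ _ _ _ _ fun Mb hBM hIn => ?_
      have hd := decomp_bound G w π Sb Mb hBM hIn
      have hcore := hx2 Sb.toRight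
      rw [sum_split]
      simp only [Sum.elim_inl, Sum.elim_inr, Finset.sum_const, nsmul_eq_mul]
      rw [← hv] at hd
      calc mWeight (barW w (2 * v)) Mb
          ≤ 2 * v * (Sb.toLeft.card : ℝ) + pVal G w π Sb.toRight := hd
        _ ≤ (Sb.toLeft.card : ℝ) * (2 * v) + ∑ i ∈ Sb.toRight, x i := by
            linarith
  · rintro ⟨y, hy1, hy2⟩
    refine ⟨fun i => y (Sum.inr i) +
      (∑ u ∈ Finset.univ.filter fun u => π u = i, y (Sum.inl u)) -
        2 * v * ((Finset.univ.filter fun u : V => π u = i).card : ℝ), ?_, ?_⟩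
    · -- efficiency
      have hfib1 : ∑ i : Fin n, ∑ u ∈ Finset.univ.filter fun u => π u = i,
          y (Sum.inl u) = ∑ u : V, y (Sum.inl u) :=
        Finset.sum_fiberwise Finset.univ π (fun u => y (Sum.inl u))
      have hfib2 : ∑ i : Fin n,
          ((Finset.univ.filter fun u : V => π u = i).card : ℝ) =
          (Fintype.card V : ℝ) := by
        have h := Finset.sum_fiberwise Finset.univ π (fun _ : V => (1 : ℝ))
        simpa [Finset.sum_const, nsmul_eq_mul, Finset.card_univ] using h
      have hyuniv : ∑ a : V ⊕ Fin n, y a =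
          2 * v * (Fintype.card V : ℝ) + v := by
        rw [hy1, bVal_univ_eq]
      rw [sum_univ_split] at hyuniv
      have : ∑ i : Fin n, (y (Sum.inr i) +
          (∑ u ∈ Finset.univ.filter fun u => π u = i, y (Sum.inl u)) -
          2 * v * ((Finset.univ.filter fun u : V => π u = i).card : ℝ)) =
          (∑ i : Fin n, y (Sum.inr i)) + (∑ u : V, y (Sum.inl u)) -
            2 * v * (Fintype.card V : ℝ) := by
        rw [← hfib1, ← hfib2, Finset.sum_sub_distrib, Finset.sum_add_distrib,
          Finset.mul_sum]
      rw [this]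
      rw [← hv]
      linarith
    · intro S
      set Sb : Finset (V ⊕ Fin n) :=
        ((Finset.univ.filter fun u : V => π u ∈ S).image Sum.inl) ∪
          S.image Sum.inr with hSb
      have h1 : ∀ u : V, π u ∈ S → Sum.inl u ∈ Sb := fun u hu =>
        Finset.mem_union_left _
          (Finset.mem_image.mpr ⟨u, Finset.mem_filter.mpr ⟨Finset.mem_univ _, hu⟩, rfl⟩)
      have h2 : ∀ i ∈ S, Sum.inr i ∈ Sb := fun i hi =>
        Finset.mem_union_right _ (Finset.mem_image.mpr ⟨i, hi, rfl⟩)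
      have hcb := construct_bound G w π S Sb h1 h2
      have hcore := hy2 Sb
      have hdisj : Disjoint
          ((Finset.univ.filter fun u : V => π u ∈ S).image Sum.inl)
          (S.image Sum.inr) := by
        rw [Finset.disjoint_left]
        rintro a ha hb
        obtain ⟨u, _, rfl⟩ := Finset.mem_image.mp ha
        obtain ⟨i, _, h⟩ := Finset.mem_image.mp hb
        exact Sum.inr_ne_inl h
      have hsum : ∑ a ∈ Sb, y a =
          (∑ u ∈ Finset.univ.filter fun u : V => π u ∈ S, y (Sum.inl u)) +
            ∑ i ∈ S, y (Sum.inr i) := by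
        rw [hSb, Finset.sum_union hdisj,
          Finset.sum_image (fun a _ b _ h => Sum.inl_injective h),
          Finset.sum_image (fun a _ b _ h => Sum.inr_injective h)]
      have hfib : ∑ i ∈ S, ∑ u ∈ Finset.univ.filter fun u => π u = i,
          y (Sum.inl u) =
          ∑ u ∈ Finset.univ.filter fun u : V => π u ∈ S, y (Sum.inl u) :=
        Finset.sum_fiberwise_eq_sum_filter Finset.univ S π (fun u => y (Sum.inl u))
      have hcard : ∑ i ∈ S, ((Finset.univ.filter fun u : V => π u = i).card : ℝ) =
          ((Finset.univ.filter fun u : V => π u ∈ S).card : ℝ) := by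
        have h := Finset.sum_fiberwise_eq_sum_filter Finset.univ S π
          (fun _ : V => (1 : ℝ))
        simpa [Finset.sum_const, nsmul_eq_mul] using h
      have hxsum : ∑ i ∈ S, (y (Sum.inr i) +
          (∑ u ∈ Finset.univ.filter fun u => π u = i, y (Sum.inl u)) -
          2 * v * ((Finset.univ.filter fun u : V => π u = i).card : ℝ)) =
          (∑ i ∈ S, y (Sum.inr i)) +
            (∑ u ∈ Finset.univ.filter fun u : V => π u ∈ S, y (Sum.inl u)) -
            2 * v * ((Finset.univ.filter fun u : V => π u ∈ S).card : ℝ) := by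
        rw [← hfib, ← hcard, Finset.sum_sub_distrib, Finset.sum_add_distrib,
          Finset.mul_sum]
      rw [hxsum]
      rw [← hv] at hcb
      linarith

end MatchingGames
end
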